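/- arXiv:1606.07425 — 10 statements merged into one kernel-verified Lean document; each statement's English description precedes it below -/
import Mathlib

section
/- Composition lemma: Let A : X → Y be a nonzero linear map with nonlinear condition number κ̃, and fix b in the image of A with minimum-norm solution x_opt (A x_opt = b, ‖x_opt‖ minimal). Suppose x satisfies ‖x‖ ≤ α₁‖x_opt‖ and ‖Ax − b‖ ≤ (β₁/κ̃)‖A‖‖x_opt‖, and suppose x̃ satisfies, with respect to the residual problem b̃ = b − Ax with minimum-norm solution x̃_opt, ‖x̃‖ ≤ α₂‖x̃_opt‖ and ‖Ax̃ − b̃‖ ≤ (β₂/κ̃)‖A‖‖x̃_opt‖. Then ‖x + x̃‖ ≤ (α₁ + α₂β₁)‖x_opt‖ and ‖A(x + x̃) − b‖ ≤ (β₁β₂/κ̃)‖A‖‖x_opt‖. -/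
/-- Composition lemma for `(α, β/κ̃)`-solutions of minimum-norm problems. -/
theorem stmt2 {X Y : Type*} [NormedAddCommGroup X] [NormedSpace ℝ X]
    [NormedAddCommGroup Y] [NormedSpace ℝ Y]
    [FiniteDimensional ℝ X] [FiniteDimensional ℝ Y]
    (A : X →L[ℝ] Y) (hA : A ≠ 0) (κ α₁ β₁ α₂ β₂ : ℝ)
    (hκpos : 0 < κ) (hα₂ : 0 ≤ α₂) (hβ₂ : 0 ≤ β₂)
    (hκ : ∀ c ∈ Set.range A, ∃ z, A z = c ∧ ‖z‖ ≤ κ * ‖c‖ / ‖A‖)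
    (b : Y) (hb : b ∈ Set.range A)
    (xopt : X) (hxopt : A xopt = b) (hmin : ∀ z, A z = b → ‖xopt‖ ≤ ‖z‖)
    (x xt : X)
    (hx1 : ‖x‖ ≤ α₁ * ‖xopt‖)
    (hx2 : ‖A x - b‖ ≤ β₁ / κ * ‖A‖ * ‖xopt‖)
    (xtopt : X) (hxtopt : A xtopt = b - A x)
    (hmint : ∀ z, A z = b - A x → ‖xtopt‖ ≤ ‖z‖)
    (hxt1 : ‖xt‖ ≤ α₂ * ‖xtopt‖)
    (hxt2 : ‖A xt - (b - A x)‖ ≤ β₂ / κ * ‖A‖ * ‖xtopt‖) :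
    ‖x + xt‖ ≤ (α₁ + α₂ * β₁) * ‖xopt‖ ∧
      ‖A (x + xt) - b‖ ≤ β₁ * β₂ / κ * ‖A‖ * ‖xopt‖ := by
  have hAn : 0 < ‖A‖ := norm_pos_iff.mpr hA
  -- key bound: ‖xtopt‖ ≤ β₁ * ‖xopt‖
  have hrange : b - A x ∈ Set.range A := ⟨xopt - x, by simp [hxopt]⟩
  obtain ⟨z, hz, hzn⟩ := hκ _ hrange
  have h1 : ‖xtopt‖ ≤ κ * ‖b - A x‖ / ‖A‖ := (hmint z hz).trans hzn
  have h2 : ‖b - A x‖ ≤ β₁ / κ * ‖A‖ * ‖xopt‖ := by rwa [norm_sub_rev] at hx2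
  have hkey : ‖xtopt‖ ≤ β₁ * ‖xopt‖ := by
    calc ‖xtopt‖ ≤ κ * ‖b - A x‖ / ‖A‖ := h1
      _ ≤ κ * (β₁ / κ * ‖A‖ * ‖xopt‖) / ‖A‖ := by
          gcongr
      _ = β₁ * ‖xopt‖ := by field_simp
  constructor
  · calc ‖x + xt‖ ≤ ‖x‖ + ‖xt‖ := norm_add_le _ _
      _ ≤ α₁ * ‖xopt‖ + α₂ * ‖xtopt‖ := add_le_add hx1 hxt1
      _ ≤ α₁ * ‖xopt‖ + α₂ * (β₁ * ‖xopt‖) := by gcongr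
      _ = (α₁ + α₂ * β₁) * ‖xopt‖ := by ring
  · have : A (x + xt) - b = A xt - (b - A x) := by
      simp [map_add]; abel
    rw [this]
    calc ‖A xt - (b - A x)‖ ≤ β₂ / κ * ‖A‖ * ‖xtopt‖ := hxt2
      _ ≤ β₂ / κ * ‖A‖ * (β₁ * ‖xopt‖) := by
          gcongr
      _ = β₁ * β₂ / κ * ‖A‖ * ‖xopt‖ := by ring
end

section
/- If a solver F produces, for every b in the image of A, an (α, β/κ̃)-solution with β < 1, then the t-fold recursive composition F^t (defined by F¹ = F and F^{t+1} = F^t ∘ F via residual recursion) produces an (α/(1−β), β^t/κ̃)-solution: i.e., an x with ‖x‖ ≤ (α/(1−β))‖x_opt‖ and ‖Ax − b‖ ≤ (β^t/κ̃)‖A‖‖x_opt‖. -/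
/-- In finite dimensions, every element of the range of a continuous linear map has a
minimum-norm preimage. -/
lemma exists_min_norm_sol {X Y : Type*} [NormedAddCommGroup X] [NormedSpace ℝ X]
    [NormedAddCommGroup Y] [NormedSpace ℝ Y] [FiniteDimensional ℝ X]
    (A : X →L[ℝ] Y) (c : Y) (hc : c ∈ Set.range A) :
    ∃ x, A x = c ∧ ∀ z, A z = c → ‖x‖ ≤ ‖z‖ := by
  obtain ⟨z₀, hz₀⟩ := hc
  have hSclosed : IsClosed {z : X | A z = c} := isClosed_eq A.continuous continuous_const
  have hK : IsCompact (Metric.closedBall (0 : X) ‖z₀‖ ∩ {z : X | A z = c}) :=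
    (isCompact_closedBall 0 ‖z₀‖).inter_right hSclosed
  have hz₀K : z₀ ∈ Metric.closedBall (0 : X) ‖z₀‖ ∩ {z : X | A z = c} := by
    refine ⟨?_, hz₀⟩
    simp [Metric.mem_closedBall]
  obtain ⟨x, hxK, hxmin⟩ := hK.exists_isMinOn ⟨z₀, hz₀K⟩ (continuous_norm.continuousOn)
  refine ⟨x, hxK.2, fun z hz => ?_⟩
  by_cases hzb : ‖z‖ ≤ ‖z₀‖
  · exact hxmin ⟨by simpa [Metric.mem_closedBall] using hzb, hz⟩
  · have := hxmin hz₀K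
    push_neg at hzb
    calc ‖x‖ ≤ ‖z₀‖ := this
    _ ≤ ‖z‖ := le_of_lt hzb

/-- Recursive self-composition of an `(α, β/κ̃)`-solver via residual recursion yields an
`(α/(1-β), βᵗ/κ̃)`-solver. -/
theorem stmt3 {X Y : Type*} [NormedAddCommGroup X] [NormedSpace ℝ X]
    [NormedAddCommGroup Y] [NormedSpace ℝ Y]
    [FiniteDimensional ℝ X] [FiniteDimensional ℝ Y]
    (A : X →L[ℝ] Y) (hA : A ≠ 0) (κ α β : ℝ)
    (hκpos : 0 < κ) (hα : 0 ≤ α) (hβ0 : 0 ≤ β) (hβ : β < 1)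
    (hκ : ∀ c ∈ Set.range A, ∃ z, A z = c ∧ ‖z‖ ≤ κ * ‖c‖ / ‖A‖)
    (F : Y → X)
    (hF : ∀ b ∈ Set.range A, ∀ xopt : X, A xopt = b → (∀ z, A z = b → ‖xopt‖ ≤ ‖z‖) →
      ‖F b‖ ≤ α * ‖xopt‖ ∧ ‖A (F b) - b‖ ≤ β / κ * ‖A‖ * ‖xopt‖)
    (Fiter : ℕ → Y → X)
    (hF1 : ∀ b, Fiter 1 b = F b)
    (hFsucc : ∀ t, 1 ≤ t → ∀ b, Fiter (t + 1) b = F b + Fiter t (b - A (F b)))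
    (t : ℕ) (ht : 1 ≤ t) (b : Y) (hb : b ∈ Set.range A)
    (xopt : X) (hxopt : A xopt = b) (hmin : ∀ z, A z = b → ‖xopt‖ ≤ ‖z‖) :
    ‖Fiter t b‖ ≤ α / (1 - β) * ‖xopt‖ ∧
      ‖A (Fiter t b) - b‖ ≤ β ^ t / κ * ‖A‖ * ‖xopt‖ := by
  have hAn : (0 : ℝ) < ‖A‖ := norm_pos_iff.mpr hA
  have key : ∀ t, 1 ≤ t → ∀ b ∈ Set.range A, ∀ xopt : X, A xopt = b →
      (∀ z, A z = b → ‖xopt‖ ≤ ‖z‖) →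
      ‖Fiter t b‖ ≤ α * (∑ i ∈ Finset.range t, β ^ i) * ‖xopt‖ ∧
      ‖A (Fiter t b) - b‖ ≤ β ^ t / κ * ‖A‖ * ‖xopt‖ := by
    intro t ht
    induction t, ht using Nat.le_induction with
    | base =>
      intro b hb xopt hx hmin
      rw [hF1]
      obtain ⟨h1, h2⟩ := hF b hb xopt hx hmin
      simp only [Finset.range_one, Finset.sum_singleton, pow_zero, pow_one, mul_one]
      exact ⟨h1, h2⟩
    | succ n hn ih =>
      intro b hb xopt hx hmin
      obtain ⟨hFb, hres⟩ := hF b hb xopt hx hmin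
      set b' := b - A (F b) with hb'def
      have hb' : b' ∈ Set.range A := ⟨xopt - F b, by simp [hb'def, map_sub, hx]⟩
      obtain ⟨x', hx', hmin'⟩ := exists_min_norm_sol A b' hb'
      obtain ⟨z, hz, hzle⟩ := hκ b' hb'
      have hb'norm : ‖b'‖ ≤ β / κ * ‖A‖ * ‖xopt‖ := by
        rw [hb'def, norm_sub_rev]; exact hres
      have hx'n : ‖x'‖ ≤ β * ‖xopt‖ := by
        have h1 : ‖x'‖ ≤ κ * ‖b'‖ / ‖A‖ := (hmin' z hz).trans hzle
        have h2 : κ * ‖b'‖ / ‖A‖ ≤ κ * (β / κ * ‖A‖ * ‖xopt‖) / ‖A‖ := by gcongr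
        have h3 : κ * (β / κ * ‖A‖ * ‖xopt‖) / ‖A‖ = β * ‖xopt‖ := by
          field_simp
        linarith
      obtain ⟨ih1, ih2⟩ := ih b' hb' x' hx' hmin'
      rw [hFsucc n hn b]
      have hxoptnn : (0 : ℝ) ≤ ‖xopt‖ := norm_nonneg _
      have hsumnn : (0 : ℝ) ≤ ∑ i ∈ Finset.range n, β ^ i :=
        Finset.sum_nonneg fun i _ => pow_nonneg hβ0 i
      constructor
      · have h4 : ‖Fiter n b'‖ ≤ α * (∑ i ∈ Finset.range n, β ^ i) * (β * ‖xopt‖) := by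
          calc ‖Fiter n b'‖ ≤ α * (∑ i ∈ Finset.range n, β ^ i) * ‖x'‖ := ih1
          _ ≤ α * (∑ i ∈ Finset.range n, β ^ i) * (β * ‖xopt‖) :=
              mul_le_mul_of_nonneg_left hx'n (mul_nonneg hα hsumnn)
        calc ‖F b + Fiter n b'‖ ≤ ‖F b‖ + ‖Fiter n b'‖ := norm_add_le _ _
        _ ≤ α * ‖xopt‖ + α * (∑ i ∈ Finset.range n, β ^ i) * (β * ‖xopt‖) := by
            linarith
        _ = α * (∑ i ∈ Finset.range (n + 1), β ^ i) * ‖xopt‖ := by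
            rw [geom_sum_succ]; ring
      · have heq : A (F b + Fiter n b') - b = A (Fiter n b') - b' := by
          rw [map_add, hb'def]; abel
        rw [heq]
        calc ‖A (Fiter n b') - b'‖ ≤ β ^ n / κ * ‖A‖ * ‖x'‖ := ih2
        _ ≤ β ^ n / κ * ‖A‖ * (β * ‖xopt‖) :=
            mul_le_mul_of_nonneg_left hx'n (by positivity)
        _ = β ^ (n + 1) / κ * ‖A‖ * ‖xopt‖ := by ring
  obtain ⟨h1, h2⟩ := key t ht b hb xopt hxopt hmin
  refine ⟨h1.trans ?_, h2⟩
  have h1β : (0 : ℝ) < 1 - β := by linarith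
  have hgs : (∑ i ∈ Finset.range t, β ^ i) * (1 - β) ≤ 1 := by
    nlinarith [geom_sum_mul β t, pow_nonneg hβ0 t]
  have hgeom : (∑ i ∈ Finset.range t, β ^ i) ≤ 1 / (1 - β) := (le_div_iff₀ h1β).mpr hgs
  calc α * (∑ i ∈ Finset.range t, β ^ i) * ‖xopt‖ ≤ α * (1 / (1 - β)) * ‖xopt‖ := by gcongr
  _ = α / (1 - β) * ‖xopt‖ := by ring
end

section
/- Composition with an exact solver: Let A : X → Y have nonlinear condition number κ̃. If x is a (1+ε, εδ/κ̃)-solution for b (so ‖x‖ ≤ (1+ε)‖x_opt‖ and ‖Ax − b‖ ≤ (εδ/κ̃)‖A‖‖x_opt‖), and x̃ is an exact solution of the residual problem b̃ = b − Ax with ‖x̃‖ ≤ M‖x̃_opt‖, then x + x̃ satisfies A(x + x̃) = b and ‖x + x̃‖ ≤ (1 + ε(1 + δM))‖x_opt‖. -/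
/-- Composition with an exact `(M,0)`-solver: a `(1+ε, εδ/κ̃)`-solution followed by an
exact solution of the residual yields a `(1+ε(1+δM), 0)`-solution. -/
theorem stmt4 {X Y : Type*} [NormedAddCommGroup X] [NormedSpace ℝ X]
    [NormedAddCommGroup Y] [NormedSpace ℝ Y]
    [FiniteDimensional ℝ X] [FiniteDimensional ℝ Y]
    (A : X →L[ℝ] Y) (hA : A ≠ 0) (κ ε δ M : ℝ)
    (hκpos : 0 < κ) (hM : 0 ≤ M)
    (hκ : ∀ c ∈ Set.range A, ∃ z, A z = c ∧ ‖z‖ ≤ κ * ‖c‖ / ‖A‖)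
    (b : Y) (hb : b ∈ Set.range A)
    (xopt : X) (hxopt : A xopt = b) (hmin : ∀ z, A z = b → ‖xopt‖ ≤ ‖z‖)
    (x xt : X)
    (hx1 : ‖x‖ ≤ (1 + ε) * ‖xopt‖)
    (hx2 : ‖A x - b‖ ≤ ε * δ / κ * ‖A‖ * ‖xopt‖)
    (xtopt : X) (hxtopt : A xtopt = b - A x)
    (hmint : ∀ z, A z = b - A x → ‖xtopt‖ ≤ ‖z‖)
    (hxt1 : A xt = b - A x)
    (hxt2 : ‖xt‖ ≤ M * ‖xtopt‖) :
    A (x + xt) = b ∧ ‖x + xt‖ ≤ (1 + ε * (1 + δ * M)) * ‖xopt‖ := by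
  have hAnorm : 0 < ‖A‖ := norm_pos_iff.mpr hA
  constructor
  · rw [map_add, hxt1]; abel
  · obtain ⟨z, hz1, hz2⟩ := hκ (b - A x) ⟨xtopt, hxtopt⟩
    have h1 : ‖xtopt‖ ≤ κ * ‖b - A x‖ / ‖A‖ := le_trans (hmint z hz1) hz2
    have hbax : ‖b - A x‖ = ‖A x - b‖ := norm_sub_rev _ _
    have h2 : ‖xtopt‖ ≤ ε * δ * ‖xopt‖ := by
      calc ‖xtopt‖ ≤ κ * ‖A x - b‖ / ‖A‖ := by rwa [hbax] at h1
        _ ≤ κ * (ε * δ / κ * ‖A‖ * ‖xopt‖) / ‖A‖ := by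
            gcongr
        _ = ε * δ * ‖xopt‖ := by field_simp
    calc ‖x + xt‖ ≤ ‖x‖ + ‖xt‖ := norm_add_le _ _
      _ ≤ (1 + ε) * ‖xopt‖ + M * (ε * δ * ‖xopt‖) := by
          gcongr
          exact le_trans hxt2 (by nlinarith)
      _ = (1 + ε * (1 + δ * M)) * ‖xopt‖ := by ring
end

section
/- Minimum spanning tree routing is an n-approximation: Let G = (V,E,ℓ) be a connected graph with positive edge lengths, n = |V|, d the induced shortest-path metric, and T a minimum-total-length spanning tree of G with induced tree metric d_T. Then d_T(x,y) ≤ n·d(x,y) for all x,y ∈ V; consequently the unique flow routing demands b along T has cost at most n·‖b‖_opt(d). -/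
/-!
By the cycle property of minimum spanning trees, every edge `xu` of `G` is at least as long as
each edge of the tree path from `x` to `u`; that path has fewer than `n` edges, so
`d_T(x, u) ≤ n·ℓ(xu)`, and summing along walks of `G` gives `d_T ≤ n·d`. Dually, if `φ` is
`1`-Lipschitz for `d_T` then `φ / n` is `1`-Lipschitz for `d`, which compares the two optimal costs.
-/

namespace SimpleGraph

variable {V : Type*}

section Exchange

variable {T : SimpleGraph V} {x u : V} {f : Sym2 V}

lemma IsAcyclic.not_reachable_deleteEdges_of_mem_edges (hT : T.IsAcyclic) (p : T.Path x u)
    (hf : f ∈ (p : T.Walk x u).edges) : ¬ (T.deleteEdges {f}).Reachable x u := by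
  classical
  rintro ⟨q⟩
  have hq : f ∉ (q.mapLe (deleteEdges_le _)).edges := by
    rw [Walk.edges_mapLe_eq_edges]
    intro hfq
    simpa [edgeSet_deleteEdges] using q.edges_subset_edgeSet hfq
  obtain rfl : p = (q.mapLe (deleteEdges_le _)).toPath := (hT.subsingleton_path x u).elim _ _
  exact hq (Walk.edges_bypass_subset_edges _ hf)

/-- `f` lies on the cycle closed by `s(x, u)`, so it is no bridge of `T ⊔ edge x u`; and `x`, `u`
lie in different components of `T` minus `f`. -/
lemma IsTree.deleteEdges_sup_edge (hT : T.IsTree) (p : T.Path x u)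
    (hf : f ∈ (p : T.Walk x u).edges) (he : s(x, u) ∉ T.edgeSet) :
    (T.deleteEdges {f} ⊔ edge x u).IsTree := by
  have hxu : x ≠ u := by
    rintro rfl
    exact Path.notMem_edges_of_loop hf
  set K := T ⊔ edge x u
  have hK : K.Adj u x := Or.inr (by simp [edge_adj, hxu.symm])
  have hcycle : (Walk.cons hK ((p : T.Walk x u).mapLe le_sup_left)).IsCycle := by
    rw [Walk.cons_isCycle_iff, Walk.isPath_mapLe, Walk.edges_mapLe_eq_edges, Sym2.eq_swap]
    exact ⟨p.2, fun h ↦ he ((p : T.Walk x u).edges_subset_edgeSet h)⟩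
  have hfK : f ∈ (Walk.cons hK ((p : T.Walk x u).mapLe le_sup_left)).edges := by
    simp [hf]
  have hconn : (K.deleteEdges {f}).Connected := by
    cases f with
    | h a b =>
      exact (hT.connected.mono le_sup_left).connected_delete_edge_of_not_isBridge
        fun hbr ↦ hbr.notMem_edges_of_isCycle hcycle hfK
  refine ⟨hconn.mono ?_, ?_⟩
  · rw [deleteEdges_sup]
    exact sup_le_sup_left (deleteEdges_le _) _
  · exact (hT.isAcyclic.anti (deleteEdges_le _)).sup_edge_of_not_reachable
      (hT.isAcyclic.not_reachable_deleteEdges_of_mem_edges p hf)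

end Exchange

section TotalLength

variable {M : Type*} [AddCommMonoid M] [Finite V]

noncomputable def totalLength (ℓ : Sym2 V → M) (H : SimpleGraph V) : M :=
  ∑ e ∈ (Set.toFinite H.edgeSet).toFinset, ℓ e

lemma totalLength_deleteEdges_sup_edge (ℓ : Sym2 V → M) {H : SimpleGraph V} {x u : V}
    {f : Sym2 V} (hf : f ∈ H.edgeSet) (he : s(x, u) ∉ H.edgeSet) (hxu : x ≠ u) :
    totalLength ℓ (H.deleteEdges {f} ⊔ edge x u) + ℓ f = totalLength ℓ H + ℓ s(x, u) := by
  classical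
  have hedges : (Set.toFinite (H.deleteEdges {f} ⊔ edge x u).edgeSet).toFinset =
      insert s(x, u) ((Set.toFinite H.edgeSet).toFinset.erase f) := by
    ext e
    simp only [edgeSet_sup, edgeSet_deleteEdges, edgeSet_edge_of_ne hxu, Set.Finite.mem_toFinset,
      Finset.mem_insert, Finset.mem_erase]
    grind
  have hnot : s(x, u) ∉ (Set.toFinite H.edgeSet).toFinset.erase f := by simp [he]
  rw [totalLength, hedges, Finset.sum_insert hnot, add_assoc,
    Finset.sum_erase_add _ _ (by simpa using hf), add_comm, totalLength]

end TotalLength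

def IsWalkDist (H : SimpleGraph V) (ℓ : Sym2 V → ℝ) (D : V → V → ℝ) : Prop :=
  ∀ x y, IsGLB {r | ∃ p : H.Walk x y, r = (p.edges.map ℓ).sum} (D x y)

namespace IsWalkDist

variable {H : SimpleGraph V} {ℓ : Sym2 V → ℝ} {D : V → V → ℝ}

lemma le_sum (hD : IsWalkDist H ℓ D) {x y : V} (p : H.Walk x y) :
    D x y ≤ (p.edges.map ℓ).sum :=
  (hD x y).1 ⟨p, rfl⟩

lemma self_nonpos (hD : IsWalkDist H ℓ D) (x : V) : D x x ≤ 0 := by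
  simpa using hD.le_sum (Walk.nil : H.Walk x x)

lemma nonneg (hD : IsWalkDist H ℓ D) (hℓ : ∀ e ∈ H.edgeSet, 0 ≤ ℓ e) (x y : V) : 0 ≤ D x y := by
  refine (hD x y).2 ?_
  rintro _ ⟨p, rfl⟩
  exact List.sum_nonneg (by simpa using fun e he ↦ hℓ e (p.edges_subset_edgeSet he))

lemma triangle (hD : IsWalkDist H ℓ D) (x y z : V) : D x z ≤ D x y + D y z := by
  suffices ∀ p : H.Walk x y, D x z - (p.edges.map ℓ).sum ≤ D y z by
    have : D x z - D y z ≤ D x y := (hD x y).2 fun _ ⟨p, hp⟩ ↦ by linarith [this p]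
    linarith
  intro p
  refine (hD y z).2 fun _ ⟨q, hq⟩ ↦ ?_
  have := hD.le_sum (p.append q)
  rw [Walk.edges_append, List.map_append, List.sum_append] at this
  linarith

lemma le_mul_of_forall_adj (hD : IsWalkDist H ℓ D) {D' : V → V → ℝ} {c : ℝ} (hc : 0 < c)
    (hself : ∀ x, D' x x ≤ 0) (htri : ∀ x y z, D' x z ≤ D' x y + D' y z)
    (hadj : ∀ x y, H.Adj x y → D' x y ≤ c * ℓ s(x, y)) (x y : V) : D' x y ≤ c * D x y := by
  have hwalk : ∀ {x y} (p : H.Walk x y), D' x y ≤ c * (p.edges.map ℓ).sum := by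
    intro x y p
    induction p with
    | nil => simpa using hself _
    | @cons v w z hvw q ih =>
      rw [Walk.edges_cons, List.map_cons, List.sum_cons, mul_add]
      linarith [hadj v w hvw, htri v w z]
  rw [← div_le_iff₀' hc]
  exact (hD x y).2 fun _ ⟨p, hp⟩ ↦ hp ▸ (div_le_iff₀' hc).2 (hwalk p)

end IsWalkDist

section MinimumSpanningTree

variable {G T : SimpleGraph V} {ℓ : Sym2 V → ℝ}

/-- The cycle property of minimum spanning trees. -/
lemma IsTree.le_of_mem_edges_of_minimal [Finite V] (hTG : T ≤ G) (hT : T.IsTree)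
    (hmin : ∀ T' : SimpleGraph V, T' ≤ G → T'.IsTree → totalLength ℓ T ≤ totalLength ℓ T')
    {x u : V} (hxu : G.Adj x u) (p : T.Path x u) {f : Sym2 V}
    (hf : f ∈ (p : T.Walk x u).edges) : ℓ f ≤ ℓ s(x, u) := by
  by_cases he : s(x, u) ∈ T.edgeSet
  · obtain rfl : p = Path.singleton ((mem_edgeSet T).1 he) :=
      (hT.isAcyclic.subsingleton_path x u).elim _ _
    simp_all [Path.singleton]
  · have hT' : (T.deleteEdges {f} ⊔ edge x u) ≤ G :=
      sup_le ((deleteEdges_le _).trans hTG) ((edge_le_iff G).2 (Or.inr hxu))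
    have := hmin _ hT' (hT.deleteEdges_sup_edge p hf he)
    have := totalLength_deleteEdges_sup_edge ℓ ((p : T.Walk x u).edges_subset_edgeSet hf) he hxu.ne
    linarith

lemma IsTree.walkDist_le_card_mul_of_adj [Fintype V] (hℓ : ∀ e ∈ G.edgeSet, 0 ≤ ℓ e)
    (hTG : T ≤ G) (hT : T.IsTree)
    (hmin : ∀ T' : SimpleGraph V, T' ≤ G → T'.IsTree → totalLength ℓ T ≤ totalLength ℓ T')
    {dT : V → V → ℝ} (hdT : IsWalkDist T ℓ dT) {x u : V} (hxu : G.Adj x u) :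
    dT x u ≤ Fintype.card V * ℓ s(x, u) := by
  obtain ⟨p, hp, -⟩ := hT.existsUnique_path x u
  have hlen : (p.edges.length : ℝ) ≤ Fintype.card V := by
    rw [Walk.length_edges]
    exact_mod_cast hp.length_lt.le
  calc dT x u ≤ (p.edges.map ℓ).sum := hdT.le_sum p
    _ ≤ p.edges.length * ℓ s(x, u) := by
      have hedge : ∀ r ∈ p.edges.map ℓ, r ≤ ℓ s(x, u) := by
        simp only [List.mem_map]
        rintro _ ⟨f, hf, rfl⟩
        exact hT.le_of_mem_edges_of_minimal hTG hmin hxu ⟨p, hp⟩ hf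
      simpa using List.sum_le_card_nsmul _ _ hedge
    _ ≤ Fintype.card V * ℓ s(x, u) := mul_le_mul_of_nonneg_right hlen (hℓ _ hxu)

end MinimumSpanningTree

end SimpleGraph

section LipschitzDuality

variable {V : Type*} [Fintype V]

/-- By Kantorovich–Rubinstein duality, `sSup (lipschitzPairings D b)` is the minimum cost
`‖b‖_opt(D)` of a flow with divergence `b`. -/
def lipschitzPairings (D : V → V → ℝ) (b : V → ℝ) : Set ℝ :=
  {s | ∃ φ : V → ℝ, (∀ x y, |φ x - φ y| ≤ D x y) ∧ s = ∑ v, φ v * b v}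

lemma bddAbove_lipschitzPairings [Nonempty V] (D : V → V → ℝ) {b : V → ℝ} (hb : ∑ v, b v = 0) :
    BddAbove (lipschitzPairings D b) := by
  obtain ⟨v₀⟩ := ‹Nonempty V›
  refine ⟨∑ v, D v v₀ * |b v|, ?_⟩
  rintro _ ⟨φ, hφ, rfl⟩
  have hshift : ∑ v, φ v * b v = ∑ v, (φ v - φ v₀) * b v := by
    simp only [sub_mul, Finset.sum_sub_distrib, ← Finset.mul_sum, hb, mul_zero, sub_zero]
  rw [hshift]
  refine Finset.sum_le_sum fun v _ ↦ ?_
  calc (φ v - φ v₀) * b v ≤ |φ v - φ v₀| * |b v| := by rw [← abs_mul]; exact le_abs_self _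
    _ ≤ D v v₀ * |b v| := by gcongr; exact hφ v v₀

lemma sSup_lipschitzPairings_le_mul [Nonempty V] {D₁ D₂ : V → V → ℝ} {c : ℝ} (hc : 0 < c)
    (hD₁ : ∀ x y, 0 ≤ D₁ x y) (hle : ∀ x y, D₁ x y ≤ c * D₂ x y) {b : V → ℝ}
    (hb : ∑ v, b v = 0) :
    sSup (lipschitzPairings D₁ b) ≤ c * sSup (lipschitzPairings D₂ b) := by
  refine csSup_le ⟨0, 0, by simpa using hD₁, by simp⟩ ?_
  rintro _ ⟨φ, hφ, rfl⟩
  have hscaled : ∑ v, φ v / c * b v ∈ lipschitzPairings D₂ b := by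
    refine ⟨fun v ↦ φ v / c, fun x y ↦ ?_, rfl⟩
    rw [← sub_div, abs_div, abs_of_pos hc, div_le_iff₀' hc]
    exact (hφ x y).trans (hle x y)
  calc ∑ v, φ v * b v = c * ∑ v, φ v / c * b v := by
        rw [Finset.mul_sum]; congr 1; ext v; field_simp
    _ ≤ c * sSup (lipschitzPairings D₂ b) := by
        gcongr; exact le_csSup (bddAbove_lipschitzPairings D₂ hb) hscaled

end LipschitzDuality

theorem stmt8_general {V : Type*} [Fintype V]
    (G : SimpleGraph V)
    (ℓ : Sym2 V → ℝ) (hℓ : ∀ e ∈ G.edgeSet, 0 < ℓ e)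
    (T : SimpleGraph V) (hTG : T ≤ G) (hT : T.IsTree)
    (hmin : ∀ T' : SimpleGraph V, T' ≤ G → T'.IsTree →
      ∑ e ∈ (Set.toFinite T.edgeSet).toFinset, ℓ e ≤
      ∑ e ∈ (Set.toFinite T'.edgeSet).toFinset, ℓ e)
    (d dT : V → V → ℝ)
    (hd : ∀ x y, IsGLB {r | ∃ p : G.Walk x y, r = (p.edges.map ℓ).sum} (d x y))
    (hdT : ∀ x y, IsGLB {r | ∃ p : T.Walk x y, r = (p.edges.map ℓ).sum} (dT x y))
    (n : ℕ) (hn : n = Fintype.card V) :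
    (∀ x y, dT x y ≤ n * d x y) ∧
    (∀ b : V → ℝ, (∑ v, b v = 0) →
      sSup {s | ∃ φ : V → ℝ, (∀ x y, |φ x - φ y| ≤ dT x y) ∧ s = ∑ v, φ v * b v} ≤
      n * sSup {s | ∃ φ : V → ℝ, (∀ x y, |φ x - φ y| ≤ d x y) ∧ s = ∑ v, φ v * b v}) := by
  have hdT' : SimpleGraph.IsWalkDist T ℓ dT := hdT
  have hℓ' : ∀ e ∈ G.edgeSet, 0 ≤ ℓ e := fun e he ↦ (hℓ e he).le
  have := hT.connected.nonempty
  have hn_pos : (0 : ℝ) < n := by rw [hn]; exact_mod_cast Fintype.card_pos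
  have hdT_le : ∀ x y, dT x y ≤ n * d x y :=
    SimpleGraph.IsWalkDist.le_mul_of_forall_adj hd hn_pos hdT'.self_nonpos hdT'.triangle
      fun x u hxu ↦ hn ▸ hT.walkDist_le_card_mul_of_adj hℓ' hTG hmin hdT' hxu
  exact ⟨hdT_le, fun b hb ↦ sSup_lipschitzPairings_le_mul hn_pos
    (hdT'.nonneg fun e he ↦ hℓ' e (SimpleGraph.edgeSet_mono hTG he)) hdT_le hb⟩

/-- Minimum spanning tree routing is an `n`-approximation: for a minimum-total-length
spanning tree `T` of a connected length-graph `G`, the tree metric satisfies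
`d_T ≤ n·d`, and consequently routing any zero-sum demand along `T` (whose cost is
the min-cost under `d_T`) costs at most `n` times the min-cost under `d`. -/
theorem stmt8 {V : Type*} [Fintype V] [DecidableEq V]
    (G : SimpleGraph V) (hGconn : G.Connected)
    (ℓ : Sym2 V → ℝ) (hℓ : ∀ e ∈ G.edgeSet, 0 < ℓ e)
    (T : SimpleGraph V) (hTG : T ≤ G) (hT : T.IsTree)
    (hmin : ∀ T' : SimpleGraph V, T' ≤ G → T'.IsTree →
      ∑ e ∈ (Set.toFinite T.edgeSet).toFinset, ℓ e ≤
      ∑ e ∈ (Set.toFinite T'.edgeSet).toFinset, ℓ e)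
    (d dT : V → V → ℝ)
    (hd : ∀ x y, IsGLB {r | ∃ p : G.Walk x y, r = (p.edges.map ℓ).sum} (d x y))
    (hdT : ∀ x y, IsGLB {r | ∃ p : T.Walk x y, r = (p.edges.map ℓ).sum} (dT x y))
    (n : ℕ) (hn : n = Fintype.card V) :
    (∀ x y, dT x y ≤ n * d x y) ∧
    (∀ b : V → ℝ, (∑ v, b v = 0) →
      sSup {s | ∃ φ : V → ℝ, (∀ x y, |φ x - φ y| ≤ dT x y) ∧ s = ∑ v, φ v * b v} ≤
      n * sSup {s | ∃ φ : V → ℝ, (∀ x y, |φ x - φ y| ≤ d x y) ∧ s = ∑ v, φ v * b v}) :=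
  stmt8_general G ℓ hℓ T hTG hT hmin d dT hd hdT n hn
end

section
/- Non-stretching property of coordinate-wise random rounding in ℓ₁: For each coordinate i ∈ {1,…,k}, independently choose ψᵢ uniformly from {ψ⁺, ψ⁻} (rounding odd integers up or down to even integers, fixing even integers), and let Ψ : ℤ^k → (2ℤ)^k apply ψᵢ to coordinate i. Then for all x, y ∈ ℤ^k, E[‖Ψ(x) − Ψ(y)‖₁] ≤ ‖x − y‖₁. -/
/-!
By linearity of expectation it suffices to treat one coordinate. The `i`-th rounding of a uniform
`s : Fin k → Bool` is uniform on `{ψ⁺, ψ⁻}`, so the claim reduces to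
`|ψ⁺ a - ψ⁺ b| + |ψ⁻ a - ψ⁻ b| ≤ 2 |a - b|`, a case check on the parities of `a` and `b`.
-/

open Finset

lemma abs_roundUp_sub_add_abs_roundDown_sub_le {ψp ψm : ℤ → ℤ}
    (hψp : ∀ a, ψp a = if Even a then a else a + 1)
    (hψm : ∀ a, ψm a = if Even a then a else a - 1) (a b : ℤ) :
    |ψp a - ψp b| + |ψm a - ψm b| ≤ 2 * |a - b| := by
  simp only [hψp, hψm, Int.even_iff]
  split_ifs <;> simp only [Int.abs_eq_natAbs] <;> omega

lemma average_bool_comp_eval {ι : Type*} [Fintype ι] [DecidableEq ι] (f : Bool → ℝ) (i : ι) :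
    (1 / 2 ^ Fintype.card ι : ℝ) * ∑ s : ι → Bool, f (s i) = (f true + f false) / 2 := by
  have hcard : Fintype.card ι - 1 + 1 = Fintype.card ι :=
    Nat.sub_add_cancel (Fintype.card_pos_iff.2 ⟨i⟩)
  have hsum := Fintype.sum_piFinset_apply f (univ : Finset Bool) i
  rw [Fintype.piFinset_univ, card_univ, Fintype.card_bool, nsmul_eq_mul, Fintype.sum_bool] at hsum
  rw [hsum, ← hcard]
  push_cast
  field_simp
  ring

/-- Non-stretching of coordinate-wise independent random rounding in `ℓ₁`:
averaging over all `2^k` choices of rounding each coordinate's odd integers up or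
down, the expected `ℓ₁` distance does not increase. -/
theorem stmt11 (k : ℕ) (ψp ψm : ℤ → ℤ)
    (hψp : ∀ a, ψp a = if Even a then a else a + 1)
    (hψm : ∀ a, ψm a = if Even a then a else a - 1)
    (Ψ : (Fin k → Bool) → (Fin k → ℤ) → (Fin k → ℤ))
    (hΨ : ∀ s x i, Ψ s x i = if s i then ψp (x i) else ψm (x i))
    (x y : Fin k → ℤ) :
    (1 / 2 ^ k : ℝ) * ∑ s : Fin k → Bool, ∑ i, |(Ψ s x i : ℝ) - (Ψ s y i : ℝ)| ≤
      ∑ i, |(x i : ℝ) - (y i : ℝ)| := by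
  rw [sum_comm, mul_sum]
  refine sum_le_sum fun i _ => ?_
  have hround : |(ψp (x i) : ℝ) - ψp (y i)| + |(ψm (x i) : ℝ) - ψm (y i)| ≤
      2 * |(x i : ℝ) - y i| := by
    exact_mod_cast abs_roundUp_sub_add_abs_roundDown_sub_le hψp hψm (x i) (y i)
  have havg := average_bool_comp_eval
    (fun b => |(((if b then ψp else ψm) (x i) : ℤ) : ℝ) - ((if b then ψp else ψm) (y i) : ℤ)|) i
  simp only [Fintype.card_fin, ite_apply, if_true, Bool.false_eq_true, if_false] at havg
  simp only [hΨ]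
  linarith
end

section
/- Reduction does not increase min-cost in ℓ₁: Let V₁ = ((1/2)ℤ)^k and V₀ = ℤ^k, and let the reduction map R send demands b supported on V₁ (with Σ b = 0) to demands b₀ supported on V₀ by replacing the demand at each x ∈ V₁ with the average, over all ways of rounding each non-integer coordinate up or down, of the demand placed at the rounded point. Then ‖R(b)‖_opt ≤ ‖b‖_opt, where ‖·‖_opt denotes min-cost routing in the ℓ₁ metric (equivalently, the supremum of Σ φ(x)b(x) over 1-Lipschitz-in-ℓ₁ functions φ). -/
private lemma half_helper (d : ℝ) (hd : 1/2 ≤ |d|) : |d - 1/2| + |d + 1/2| = 2 * |d| := by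
  rcases le_abs.mp hd with h | h
  · rw [abs_of_nonneg (by linarith), abs_of_nonneg (by linarith), abs_of_nonneg (by linarith)]
    ring
  · rw [abs_of_nonpos (by linarith), abs_of_nonpos (by linarith), abs_of_nonpos (by linarith)]
    ring

private lemma half_dist (a c : ℝ) (ha : ∃ n : ℤ, a = (n : ℝ))
    (hc2 : ∃ m : ℤ, c = (m : ℝ) / 2) (hc : ¬ ∃ m : ℤ, c = (m : ℝ)) :
    1/2 ≤ |a - c| := by
  obtain ⟨n, rfl⟩ := ha
  obtain ⟨m, rfl⟩ := hc2
  have hne : m ≠ 2 * n := by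
    rintro rfl
    exact hc ⟨n, by push_cast; ring⟩
  have h1 : (1 : ℤ) ≤ |2 * n - m| := Int.one_le_abs (by omega)
  have h1' : (1 : ℝ) ≤ |((2 * n - m : ℤ) : ℝ)| := by exact_mod_cast h1
  have heq : (n : ℝ) - (m : ℝ) / 2 = ((2 * n - m : ℤ) : ℝ) / 2 := by push_cast; ring
  rw [heq, abs_div, abs_of_nonneg (by norm_num : (0:ℝ) ≤ 2)]
  linarith

private lemma caseA (a c : ℝ) (t : Bool) (hd : 1/2 ≤ |a - c|) :
    |a - if t = true then c + 1 / 2 else c - 1 / 2| +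
    |a - if (!t) = true then c + 1 / 2 else c - 1 / 2| = 2 * |a - c| := by
  have := half_helper (a - c) hd
  cases t <;> simp only [Bool.not_true, Bool.not_false] <;> norm_num <;>
    rw [show a - (c + 1/2) = (a - c) - 1/2 by ring, show a - (c - 1/2) = (a - c) + 1/2 by ring] <;>
    linarith

private lemma caseB (a c : ℝ) (t : Bool) (hd : 1/2 ≤ |a - c|) :
    |(if t = true then a + 1 / 2 else a - 1 / 2) - c| +
    |(if (!t) = true then a + 1 / 2 else a - 1 / 2) - c| = 2 * |a - c| := by
  have := half_helper (a - c) hd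
  cases t <;> simp only [Bool.not_true, Bool.not_false] <;> norm_num <;>
    rw [show a + 1/2 - c = (a - c) + 1/2 by ring, show a - 1/2 - c = (a - c) - 1/2 by ring] <;>
    linarith

private lemma caseC (a c : ℝ) (t : Bool) :
    |(if t = true then a + 1 / 2 else a - 1 / 2) - if t = true then c + 1 / 2 else c - 1 / 2| +
    |(if (!t) = true then a + 1 / 2 else a - 1 / 2) -
      if (!t) = true then c + 1 / 2 else c - 1 / 2| = 2 * |a - c| := by
  cases t <;> simp only [Bool.not_true, Bool.not_false] <;> norm_num <;> ring

private lemma coord_key (k : ℕ)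
    (ρ : (Fin k → Bool) → (Fin k → ℝ) → (Fin k → ℝ))
    (hρint : ∀ s x (i : Fin k), (∃ n : ℤ, x i = (n : ℝ)) → ρ s x i = x i)
    (hρhalf : ∀ s x (i : Fin k), ¬(∃ n : ℤ, x i = (n : ℝ)) →
      ρ s x i = if s i then x i + 1 / 2 else x i - 1 / 2)
    (x y : Fin k → ℝ) (hx2 : ∀ i, ∃ n : ℤ, x i = (n : ℝ) / 2)
    (hy2 : ∀ i, ∃ n : ℤ, y i = (n : ℝ) / 2) (i : Fin k) :
    ∑ s : Fin k → Bool, |ρ s x i - ρ s y i| = 2 ^ k * |x i - y i| := by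
  set σ : (Fin k → Bool) → (Fin k → Bool) := fun s => Function.update s i (!(s i)) with hσ
  have hinv : Function.Involutive σ := by
    intro s
    funext j
    rcases eq_or_ne j i with rfl | h
    · simp [hσ]
    · simp [hσ, Function.update_of_ne h]
  have hσi : ∀ s, σ s i = !(s i) := by intro s; simp [hσ]
  have hpair : ∀ s, |ρ s x i - ρ s y i| + |ρ (σ s) x i - ρ (σ s) y i| = 2 * |x i - y i| := by
    intro s
    by_cases hxi : ∃ n : ℤ, x i = (n : ℝ) <;> by_cases hyi : ∃ n : ℤ, y i = (n : ℝ)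
    · rw [hρint s x i hxi, hρint s y i hyi, hρint (σ s) x i hxi, hρint (σ s) y i hyi]; ring
    · rw [hρint s x i hxi, hρint (σ s) x i hxi, hρhalf s y i hyi, hρhalf (σ s) y i hyi, hσi s]
      exact caseA (x i) (y i) (s i) (half_dist (x i) (y i) hxi (hy2 i) hyi)
    · rw [hρint s y i hyi, hρint (σ s) y i hyi, hρhalf s x i hxi, hρhalf (σ s) x i hxi, hσi s]
      exact caseB (x i) (y i) (s i)
        (by rw [abs_sub_comm]; exact half_dist (y i) (x i) hyi (hx2 i) hxi)
    · rw [hρhalf s x i hxi, hρhalf s y i hyi, hρhalf (σ s) x i hxi, hρhalf (σ s) y i hyi, hσi s]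
      exact caseC (x i) (y i) (s i)
  have hsum : ∑ s : Fin k → Bool, |ρ (σ s) x i - ρ (σ s) y i|
      = ∑ s : Fin k → Bool, |ρ s x i - ρ s y i| :=
    Fintype.sum_bijective σ hinv.bijective _ _ (fun s => rfl)
  have h2 : (2:ℝ) * ∑ s : Fin k → Bool, |ρ s x i - ρ s y i| = 2 ^ k * (2 * |x i - y i|) := by
    rw [two_mul]
    nth_rewrite 2 [← hsum]
    rw [← Finset.sum_add_distrib, Finset.sum_congr rfl (fun s _ => hpair s),
      Finset.sum_const, Finset.card_univ]
    simp [Fintype.card_fun]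
  linarith


open Classical in
/-- The reduction rounding half-integer demands to integer points (distributing each
point's demand uniformly over all roundings of its non-integer coordinates) does not
increase the `ℓ₁` min-cost (in Kantorovich dual form). -/
theorem stmt13 (k : ℕ)
    (b : (Fin k → ℝ) →₀ ℝ) (hb : ∑ x ∈ b.support, b x = 0)
    (hsupp : ∀ x ∈ b.support, ∀ i, ∃ n : ℤ, x i = (n : ℝ) / 2)
    (ρ : (Fin k → Bool) → (Fin k → ℝ) → (Fin k → ℝ))
    (hρint : ∀ s x (i : Fin k), (∃ n : ℤ, x i = (n : ℝ)) → ρ s x i = x i)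
    (hρhalf : ∀ s x (i : Fin k), ¬(∃ n : ℤ, x i = (n : ℝ)) →
      ρ s x i = if s i then x i + 1 / 2 else x i - 1 / 2)
    (Rb : (Fin k → ℝ) → ℝ)
    (hRb : ∀ u, Rb u = (1 / 2 ^ k) *
      ∑ s : Fin k → Bool, ∑ x ∈ b.support, if ρ s x = u then b x else 0)
    (S : Finset (Fin k → ℝ))
    (hS : S = Finset.image (fun p : (Fin k → Bool) × (Fin k → ℝ) => ρ p.1 p.2)
      (Finset.univ ×ˢ b.support)) :
    sSup {r | ∃ φ : (Fin k → ℝ) → ℝ,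
        (∀ x y : Fin k → ℝ, |φ x - φ y| ≤ ∑ i, |x i - y i|) ∧
        r = ∑ u ∈ S, φ u * Rb u} ≤
    sSup {r | ∃ φ : (Fin k → ℝ) → ℝ,
        (∀ x y : Fin k → ℝ, |φ x - φ y| ≤ ∑ i, |x i - y i|) ∧
        r = ∑ x ∈ b.support, φ x * b x} := by
  set B := {r | ∃ φ : (Fin k → ℝ) → ℝ,
      (∀ x y : Fin k → ℝ, |φ x - φ y| ≤ ∑ i, |x i - y i|) ∧
      r = ∑ x ∈ b.support, φ x * b x} with hBdef
  have h0B : (0:ℝ) ∈ B := ⟨0, by intro x y; simpa using Finset.sum_nonneg fun i _ => abs_nonneg _, by simp⟩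
  -- B is bounded above
  have hBdd : BddAbove B := by
    rcases Finset.eq_empty_or_nonempty b.support with he | ⟨x0, hx0⟩
    · refine ⟨0, ?_⟩
      rintro r ⟨φ, hφ, rfl⟩
      simp [he]
    · refine ⟨∑ x ∈ b.support, (∑ i, |x i - x0 i|) * |b x|, ?_⟩
      rintro r ⟨φ, hφ, rfl⟩
      have hshift : ∑ x ∈ b.support, φ x * b x
          = ∑ x ∈ b.support, (φ x - φ x0) * b x := by
        simp only [sub_mul, Finset.sum_sub_distrib, ← Finset.mul_sum, hb, mul_zero, sub_zero]
      rw [hshift]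
      refine Finset.sum_le_sum fun x hx => ?_
      calc (φ x - φ x0) * b x ≤ |(φ x - φ x0) * b x| := le_abs_self _
        _ = |φ x - φ x0| * |b x| := abs_mul _ _
        _ ≤ (∑ i, |x i - x0 i|) * |b x| :=
            mul_le_mul_of_nonneg_right (hφ x x0) (abs_nonneg _)
  have hsSupB0 : (0:ℝ) ≤ sSup B := le_csSup hBdd h0B
  refine Real.sSup_le ?_ hsSupB0
  rintro r ⟨φ, hφ, rfl⟩
  rcases Finset.eq_empty_or_nonempty b.support with he | hne
  · have : ∀ u, Rb u = 0 := by intro u; simp [hRb, he]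
    simpa [this] using hsSupB0
  -- ψ : average of φ ∘ ρ s
  set ψ : (Fin k → ℝ) → ℝ := fun x => (1 / 2 ^ k : ℝ) * ∑ s : Fin k → Bool, φ (ρ s x) with hψ
  -- ψ is 1-Lipschitz on the (half-integer) support
  have hψlip : ∀ x ∈ b.support, ∀ y ∈ b.support, |ψ x - ψ y| ≤ ∑ i, |x i - y i| := by
    intro x hx y hy
    have h1 : ψ x - ψ y = (1 / 2 ^ k : ℝ) * ∑ s : Fin k → Bool, (φ (ρ s x) - φ (ρ s y)) := by
      rw [hψ]
      simp only [Finset.sum_sub_distrib]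
      ring
    rw [h1, abs_mul, abs_of_nonneg (by positivity : (0:ℝ) ≤ (1 / 2 ^ k : ℝ))]
    have h2 : |∑ s : Fin k → Bool, (φ (ρ s x) - φ (ρ s y))|
        ≤ ∑ s : Fin k → Bool, ∑ i, |ρ s x i - ρ s y i| := by
      refine (Finset.abs_sum_le_sum_abs _ _).trans (Finset.sum_le_sum fun s _ => hφ _ _)
    have h3 : ∑ s : Fin k → Bool, ∑ i, |ρ s x i - ρ s y i|
        = (2:ℝ) ^ k * ∑ i, |x i - y i| := by
      rw [Finset.sum_comm, Finset.mul_sum]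
      exact Finset.sum_congr rfl fun i _ =>
        coord_key k ρ hρint hρhalf x y (hsupp x hx) (hsupp y hy) i
    calc (1 / 2 ^ k : ℝ) * |∑ s : Fin k → Bool, (φ (ρ s x) - φ (ρ s y))|
        ≤ (1 / 2 ^ k : ℝ) * ((2:ℝ) ^ k * ∑ i, |x i - y i|) := by
          refine mul_le_mul_of_nonneg_left (h2.trans_eq h3) (by positivity)
      _ = ∑ i, |x i - y i| := by
          field_simp
  -- McShane extension of ψ from the support
  set φ' : (Fin k → ℝ) → ℝ :=
    fun u => b.support.inf' hne (fun z => ψ z + ∑ i, |u i - z i|) with hφ'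
  have hφ'le : ∀ u, ∀ z ∈ b.support, φ' u ≤ ψ z + ∑ i, |u i - z i| :=
    fun u z hz => Finset.inf'_le _ hz
  have hφ'ge : ∀ u, ∃ z ∈ b.support, φ' u = ψ z + ∑ i, |u i - z i| := by
    intro u
    obtain ⟨z, hz, hz'⟩ := Finset.exists_mem_eq_inf' hne (fun z => ψ z + ∑ i, |u i - z i|)
    exact ⟨z, hz, hz'⟩
  have hφ'lip1 : ∀ u v : Fin k → ℝ, φ' u - φ' v ≤ ∑ i, |u i - v i| := by
    intro u v
    obtain ⟨z, hz, hzeq⟩ := hφ'ge v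
    have h1 : φ' u ≤ ψ z + ∑ i, |u i - z i| := hφ'le u z hz
    have h2 : ∑ i, |u i - z i| ≤ ∑ i, (|u i - v i| + |v i - z i|) :=
      Finset.sum_le_sum fun i _ => abs_sub_le _ _ _
    rw [hzeq]
    rw [Finset.sum_add_distrib] at h2
    linarith
  have hφ'lip : ∀ u v : Fin k → ℝ, |φ' u - φ' v| ≤ ∑ i, |u i - v i| := by
    intro u v
    rw [abs_sub_le_iff]
    refine ⟨hφ'lip1 u v, (hφ'lip1 v u).trans_eq ?_⟩
    exact Finset.sum_congr rfl fun i _ => abs_sub_comm _ _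
  have hφ'eq : ∀ z ∈ b.support, φ' z = ψ z := by
    intro z hz
    refine le_antisymm ?_ ?_
    · have := hφ'le z z hz
      simpa using this
    · rw [hφ']
      refine Finset.le_inf' hne _ fun w hw => ?_
      have h1 : |ψ z - ψ w| ≤ ∑ i, |z i - w i| := hψlip z hz w hw
      have h2 : ψ z - ψ w ≤ ∑ i, |z i - w i| := (le_abs_self _).trans h1
      linarith
  -- the sum rewrites
  have hrew : ∑ u ∈ S, φ u * Rb u = ∑ x ∈ b.support, ψ x * b x := by
    have hstep : ∀ (s : Fin k → Bool), ∀ x ∈ b.support,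
        ∑ u ∈ S, φ u * (if ρ s x = u then b x else 0) = φ (ρ s x) * b x := by
      intro s x hx
      have hmem : ρ s x ∈ S := by
        rw [hS]
        exact Finset.mem_image.mpr ⟨(s, x),
          Finset.mem_product.mpr ⟨Finset.mem_univ _, hx⟩, rfl⟩
      have : ∀ u ∈ S, φ u * (if ρ s x = u then b x else 0)
          = if ρ s x = u then φ (ρ s x) * b x else 0 := by
        intro u _
        split_ifs with h
        · rw [h]
        · exact mul_zero _
      rw [Finset.sum_congr rfl this, Finset.sum_ite_eq, if_pos hmem]
    have heach : ∀ u, φ u * Rb u = (1 / 2 ^ k : ℝ) *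
        ∑ s : Fin k → Bool, ∑ x ∈ b.support, φ u * (if ρ s x = u then b x else 0) := by
      intro u
      rw [hRb u, mul_left_comm]
      congr 1
      rw [Finset.mul_sum]
      exact Finset.sum_congr rfl fun s _ => Finset.mul_sum _ _ _
    calc ∑ u ∈ S, φ u * Rb u
        = (1 / 2 ^ k : ℝ) * ∑ u ∈ S,
            ∑ s : Fin k → Bool, ∑ x ∈ b.support, φ u * (if ρ s x = u then b x else 0) := by
          rw [Finset.sum_congr rfl fun u _ => heach u, ← Finset.mul_sum]
      _ = (1 / 2 ^ k : ℝ) * ∑ s : Fin k → Bool, ∑ x ∈ b.support, φ (ρ s x) * b x := by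
          congr 1
          rw [Finset.sum_comm]
          refine Finset.sum_congr rfl fun s _ => ?_
          rw [Finset.sum_comm]
          exact Finset.sum_congr rfl fun x hx => hstep s x hx
      _ = ∑ x ∈ b.support, ψ x * b x := by
          rw [Finset.sum_comm, Finset.mul_sum]
          refine Finset.sum_congr rfl fun x _ => ?_
          rw [hψ]
          rw [mul_assoc, ← Finset.sum_mul]
      _ = ∑ x ∈ b.support, ψ x * b x := rfl
  have hmemB : (∑ u ∈ S, φ u * Rb u) ∈ B := by
    refine ⟨φ', hφ'lip, ?_⟩
    rw [hrew]
    exact Finset.sum_congr rfl fun x hx => by rw [hφ'eq x hx]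
  exact le_csSup hBdd hmemB
end

section
/- Single-edge case of cost non-increase: In ℝ^k with the ℓ₁ metric, let x = (0, z) and y = (1/2, z) with z ∈ ((1/2)ℤ)^{k−1}, and consider the unit demand b = δ_y − δ_x (cost 1/2 to route). Apply the reduction distributing each point's demand uniformly over all integer roundings of its non-integer coordinates. Then the reduced demand b₀ can be routed in ℓ₁ at cost at most 1/2, i.e., ‖b₀‖_opt ≤ ‖b‖_opt = 1/2. -/
/-!
Pair the reduced demand with a 1-Lipschitz potential `φ`. The rounding acts coordinatewise and
`x`, `y` differ only in the first coordinate, so for each sign pattern `s` their roundings differ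
only there: they coincide when `s` rounds `1/2` down and are at distance `1` when it rounds up.
Averaging over the `2 ^ (k + 1)` patterns bounds the pairing by `1/2`, and the potential
`u ↦ u 0` shows that the original demand costs exactly `1/2`.
-/

open Finset

theorem sSup_setOf_exists_le {α : Type*} {P : α → Prop} {F : α → ℝ} {c : ℝ}
    (hne : ∃ a, P a) (h : ∀ a, P a → F a ≤ c) : sSup {r | ∃ a, P a ∧ r = F a} ≤ c := by
  obtain ⟨a, ha⟩ := hne
  refine csSup_le ⟨F a, a, ha, rfl⟩ ?_
  rintro r ⟨b, hb, rfl⟩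
  exact h b hb

theorem sSup_setOf_exists_eq {α : Type*} {P : α → Prop} {F : α → ℝ} {c : ℝ} {a : α}
    (ha : P a) (hFa : F a = c) (h : ∀ a, P a → F a ≤ c) : sSup {r | ∃ a, P a ∧ r = F a} = c := by
  refine le_antisymm (sSup_setOf_exists_le ⟨a, ha⟩ h) (le_csSup ⟨c, ?_⟩ ⟨a, ha, hFa.symm⟩)
  rintro r ⟨b, hb, rfl⟩
  exact h b hb

theorem sum_mul_sum_ite_sub_ite {σ α : Type*} [Fintype σ] [DecidableEq α] {S : Finset α}
    {f g : σ → α} (hf : ∀ s, f s ∈ S) (hg : ∀ s, g s ∈ S) (φ : α → ℝ) (c : ℝ) :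
    ∑ u ∈ S, φ u * (c * ∑ s, ((if f s = u then (1 : ℝ) else 0) - (if g s = u then 1 else 0)))
      = c * ∑ s, (φ (f s) - φ (g s)) := by
  simp_rw [mul_sum, mul_sub, mul_ite, mul_one, mul_zero]
  rw [sum_comm]
  refine sum_congr rfl fun s _ ↦ ?_
  rw [sum_sub_distrib, sum_ite_eq, sum_ite_eq, if_pos (hf s), if_pos (hg s)]
  ring

theorem sum_abs_sub_eq_abs_sub_of_forall_ne {ι : Type*} [Fintype ι] {u v : ι → ℝ} {i₀ : ι}
    (h : ∀ i ≠ i₀, u i = v i) : ∑ i, |u i - v i| = |u i₀ - v i₀| :=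
  sum_eq_single i₀ (fun i _ hi ↦ by rw [h i hi, sub_self, abs_zero]) (by simp)

theorem sum_pi_bool_ite_apply_zero (k : ℕ) :
    ∑ s : Fin (k + 1) → Bool, (if s 0 then (1 : ℝ) else 0) = 2 ^ k := by
  rw [← (Fin.consEquiv fun _ ↦ Bool).sum_comp, Fintype.sum_prod_type]
  simp [Fin.consEquiv]

theorem not_exists_intCast_eq_add_half (n : ℤ) : ¬∃ m : ℤ, (n : ℝ) + 1 / 2 = m := by
  rintro ⟨m, hm⟩
  have : (2 * n + 1 : ℤ) = 2 * m := by exact_mod_cast (by linarith : (2 * n + 1 : ℝ) = 2 * m)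
  omega

structure IsHalfIntegerRounding {ι : Type*} (ρ : (ι → Bool) → (ι → ℝ) → (ι → ℝ)) : Prop where
  apply_of_int : ∀ s w i, (∃ n : ℤ, w i = (n : ℝ)) → ρ s w i = w i
  apply_of_not_int : ∀ s w i, ¬(∃ n : ℤ, w i = (n : ℝ)) →
    ρ s w i = if s i then w i + 1 / 2 else w i - 1 / 2

namespace IsHalfIntegerRounding

variable {ι : Type*} {ρ : (ι → Bool) → (ι → ℝ) → (ι → ℝ)}

theorem apply_congr (hρ : IsHalfIntegerRounding ρ) (s : ι → Bool) {w w' : ι → ℝ} {i : ι}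
    (h : w i = w' i) : ρ s w i = ρ s w' i := by
  by_cases hi : ∃ n : ℤ, w i = n
  · rw [hρ.apply_of_int s w i hi, hρ.apply_of_int s w' i (h ▸ hi), h]
  · rw [hρ.apply_of_not_int s w i hi, hρ.apply_of_not_int s w' i (h ▸ hi), h]

theorem sub_apply_of_eq_intCast_of_eq_add_half (hρ : IsHalfIntegerRounding ρ) (s : ι → Bool)
    {w w' : ι → ℝ} {i : ι} {n : ℤ} (hw : w i = n) (hw' : w' i = n + 1 / 2) :
    ρ s w' i - ρ s w i = if s i then 1 else 0 := by
  rw [hρ.apply_of_int s w i ⟨n, hw⟩,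
    hρ.apply_of_not_int s w' i (hw' ▸ not_exists_intCast_eq_add_half n), hw, hw']
  split_ifs <;> ring

theorem sum_abs_cons_half_sub_cons_zero {k : ℕ}
    {ρ : (Fin (k + 1) → Bool) → (Fin (k + 1) → ℝ) → (Fin (k + 1) → ℝ)}
    (hρ : IsHalfIntegerRounding ρ) (s : Fin (k + 1) → Bool) (z : Fin k → ℝ) :
    ∑ i, |ρ s (Fin.cons (1 / 2) z) i - ρ s (Fin.cons 0 z) i| = if s 0 then 1 else 0 := by
  rw [sum_abs_sub_eq_abs_sub_of_forall_ne (i₀ := 0)]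
  · rw [hρ.sub_apply_of_eq_intCast_of_eq_add_half s (n := 0) (by simp) (by simp)]
    split_ifs <;> simp
  · intro i hi
    obtain ⟨j, rfl⟩ := Fin.exists_succ_eq.2 hi
    exact hρ.apply_congr s (by simp)

end IsHalfIntegerRounding

open Classical in
theorem stmt14_general (k : ℕ) (z : Fin k → ℝ)
    (x y : Fin (k + 1) → ℝ)
    (hx : x = Fin.cons (0 : ℝ) z) (hy : y = Fin.cons (1 / 2 : ℝ) z)
    (ρ : (Fin (k + 1) → Bool) → (Fin (k + 1) → ℝ) → (Fin (k + 1) → ℝ))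
    (hρint : ∀ s w (i : Fin (k + 1)), (∃ n : ℤ, w i = (n : ℝ)) → ρ s w i = w i)
    (hρhalf : ∀ s w (i : Fin (k + 1)), ¬(∃ n : ℤ, w i = (n : ℝ)) →
      ρ s w i = if s i then w i + 1 / 2 else w i - 1 / 2)
    (Rb : (Fin (k + 1) → ℝ) → ℝ)
    (hRb : ∀ u, Rb u = (1 / 2 ^ (k + 1)) * ∑ s : Fin (k + 1) → Bool,
      ((if ρ s y = u then (1 : ℝ) else 0) - (if ρ s x = u then (1 : ℝ) else 0)))
    (S : Finset (Fin (k + 1) → ℝ))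
    (hS : S = Finset.image (fun p : (Fin (k + 1) → Bool) × (Fin (k + 1) → ℝ) => ρ p.1 p.2)
      (Finset.univ ×ˢ ({x, y} : Finset (Fin (k + 1) → ℝ)))) :
    sSup {r | ∃ φ : (Fin (k + 1) → ℝ) → ℝ,
        (∀ u v : Fin (k + 1) → ℝ, |φ u - φ v| ≤ ∑ i, |u i - v i|) ∧
        r = ∑ u ∈ S, φ u * Rb u} ≤ 1 / 2 ∧
    sSup {r | ∃ φ : (Fin (k + 1) → ℝ) → ℝ,
        (∀ u v : Fin (k + 1) → ℝ, |φ u - φ v| ≤ ∑ i, |u i - v i|) ∧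
        r = φ y - φ x} = 1 / 2 := by
  have hρ : IsHalfIntegerRounding ρ := ⟨hρint, hρhalf⟩
  have hmem : ∀ s, ∀ w ∈ ({x, y} : Finset _), ρ s w ∈ S := fun s w hw ↦
    hS ▸ mem_image.2 ⟨(s, w), mem_product.2 ⟨mem_univ s, hw⟩, rfl⟩
  subst hx hy
  constructor
  · refine sSup_setOf_exists_le ⟨0, fun u v ↦ by simpa using sum_nonneg fun i _ ↦ abs_nonneg _⟩
      fun φ hφ ↦ ?_
    simp_rw [hRb]
    rw [sum_mul_sum_ite_sub_ite (fun s ↦ hmem s _ (by simp)) (fun s ↦ hmem s _ (by simp))]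
    calc 1 / 2 ^ (k + 1) * ∑ s, (φ (ρ s (Fin.cons (1 / 2) z)) - φ (ρ s (Fin.cons 0 z)))
        ≤ 1 / 2 ^ (k + 1) * ∑ s : Fin (k + 1) → Bool, (if s 0 then 1 else 0) := by
          gcongr with s
          exact (le_abs_self _).trans
            ((hφ _ _).trans_eq (hρ.sum_abs_cons_half_sub_cons_zero s z))
      _ = 1 / 2 := by rw [sum_pi_bool_ite_apply_zero, pow_succ]; field_simp
  · refine sSup_setOf_exists_eq (a := fun u ↦ u 0) (fun u v ↦ ?_) (by simp) fun φ hφ ↦ ?_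
    · exact single_le_sum (f := fun i ↦ |u i - v i|) (fun i _ ↦ abs_nonneg _) (mem_univ 0)
    · refine (le_abs_self _).trans ((hφ _ _).trans_eq ?_)
      simp [Fin.sum_univ_succ]

open Classical in
/-- Single-edge case of cost non-increase: for the unit demand `δ_y − δ_x` with
`x = (0,z)`, `y = (1/2,z)` and `z` half-integer, the reduced demand obtained by
uniformly rounding half-integer coordinates routes at cost at most `1/2`, while the
original min-cost is exactly `1/2`. -/
theorem stmt14 (k : ℕ) (z : Fin k → ℝ)
    (hz : ∀ i, ∃ n : ℤ, z i = (n : ℝ) / 2)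
    (x y : Fin (k + 1) → ℝ)
    (hx : x = Fin.cons (0 : ℝ) z) (hy : y = Fin.cons (1 / 2 : ℝ) z)
    (ρ : (Fin (k + 1) → Bool) → (Fin (k + 1) → ℝ) → (Fin (k + 1) → ℝ))
    (hρint : ∀ s w (i : Fin (k + 1)), (∃ n : ℤ, w i = (n : ℝ)) → ρ s w i = w i)
    (hρhalf : ∀ s w (i : Fin (k + 1)), ¬(∃ n : ℤ, w i = (n : ℝ)) →
      ρ s w i = if s i then w i + 1 / 2 else w i - 1 / 2)
    (Rb : (Fin (k + 1) → ℝ) → ℝ)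
    (hRb : ∀ u, Rb u = (1 / 2 ^ (k + 1)) * ∑ s : Fin (k + 1) → Bool,
      ((if ρ s y = u then (1 : ℝ) else 0) - (if ρ s x = u then (1 : ℝ) else 0)))
    (S : Finset (Fin (k + 1) → ℝ))
    (hS : S = Finset.image (fun p : (Fin (k + 1) → Bool) × (Fin (k + 1) → ℝ) => ρ p.1 p.2)
      (Finset.univ ×ˢ ({x, y} : Finset (Fin (k + 1) → ℝ)))) :
    sSup {r | ∃ φ : (Fin (k + 1) → ℝ) → ℝ,
        (∀ u v : Fin (k + 1) → ℝ, |φ u - φ v| ≤ ∑ i, |u i - v i|) ∧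
        r = ∑ u ∈ S, φ u * Rb u} ≤ 1 / 2 ∧
    sSup {r | ∃ φ : (Fin (k + 1) → ℝ) → ℝ,
        (∀ u v : Fin (k + 1) → ℝ, |φ u - φ v| ≤ ∑ i, |u i - v i|) ∧
        r = φ y - φ x} = 1 / 2 :=
  stmt14_general k z x y hx hy ρ hρint hρhalf Rb hRb S hS
end

section
/- Preconditioner quality bound (telescoping level costs): Let b_T, b_{T−1}, …, b₀ be a sequence of zero-sum demand vectors in ℓ₁-space ℝ^k, where b_{t−1} is obtained from b_t by a reduction satisfying (i) ‖b_{t−1}‖_opt ≤ ‖b_t‖_opt and (ii) the reduction cost at level t is at most k·2^{−t}·‖b_t‖₁, and where each b_t is supported on a 2^{−t}-separated set (so 2^{−t−1}‖b_t‖₁ ≤ ‖b_t‖_opt) and b₀ is supported on a set of ℓ₁-diameter at most k. Then ‖b_T‖_opt ≤ Σ_{s=0}^{T} k·2^{−s}‖b_s‖₁ ≤ 2k(T+1)·‖b_T‖_opt. -/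
open Finset

namespace Stmt16Aux

variable {k : ℕ}

/-- The dual set. -/
def Sset (c : (Fin k → ℝ) →₀ ℝ) : Set ℝ :=
  {r | ∃ φ : (Fin k → ℝ) → ℝ,
      (∀ x y : Fin k → ℝ, |φ x - φ y| ≤ ∑ i, |x i - y i|) ∧
      r = ∑ x ∈ c.support, φ x * c x}

lemma zero_mem (c : (Fin k → ℝ) →₀ ℝ) : (0 : ℝ) ∈ Sset c := by
  refine ⟨fun _ => 0, ?_, ?_⟩ <;> simp [Finset.sum_nonneg, abs_nonneg]

lemma sum_supp_eq (φ : (Fin k → ℝ) → ℝ) (c : (Fin k → ℝ) →₀ ℝ)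
    (U : Finset (Fin k → ℝ)) (h : c.support ⊆ U) :
    ∑ x ∈ c.support, φ x * c x = ∑ x ∈ U, φ x * c x := by
  refine Finset.sum_subset h fun x _ hx => ?_
  simp [Finsupp.notMem_support_iff.mp hx]

lemma mem_le_bound (c : (Fin k → ℝ) →₀ ℝ)
    (hz : ∑ x ∈ c.support, c x = 0) (x₀ : Fin k → ℝ) :
    ∀ r ∈ Sset c, r ≤ ∑ x ∈ c.support, (∑ i, |x i - x₀ i|) * |c x| := by
  rintro r ⟨φ, hφ, rfl⟩
  have h1 : ∑ x ∈ c.support, φ x * c x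
      = ∑ x ∈ c.support, (φ x - φ x₀) * c x := by
    simp only [sub_mul, Finset.sum_sub_distrib]
    rw [← Finset.mul_sum, hz, mul_zero, sub_zero]
  rw [h1]
  refine Finset.sum_le_sum fun x _ => ?_
  calc (φ x - φ x₀) * c x ≤ |(φ x - φ x₀) * c x| := le_abs_self _
    _ = |φ x - φ x₀| * |c x| := abs_mul _ _
    _ ≤ (∑ i, |x i - x₀ i|) * |c x| :=
        mul_le_mul_of_nonneg_right (hφ x x₀) (abs_nonneg _)

lemma bdd (c : (Fin k → ℝ) →₀ ℝ) (hz : ∑ x ∈ c.support, c x = 0) :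
    BddAbove (Sset c) :=
  ⟨_, fun r hr => mem_le_bound c hz 0 r hr⟩

lemma opt_nonneg (c : (Fin k → ℝ) →₀ ℝ) (hz : ∑ x ∈ c.support, c x = 0) :
    0 ≤ sSup (Sset c) :=
  le_csSup (bdd c hz) (zero_mem c)

lemma sSup_le_bound (c : (Fin k → ℝ) →₀ ℝ)
    (hz : ∑ x ∈ c.support, c x = 0) (x₀ : Fin k → ℝ) :
    sSup (Sset c) ≤ ∑ x ∈ c.support, (∑ i, |x i - x₀ i|) * |c x| :=
  Real.sSup_le (mem_le_bound c hz x₀)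
    (Finset.sum_nonneg fun x _ => mul_nonneg
      (Finset.sum_nonneg fun i _ => abs_nonneg _) (abs_nonneg _))

/-- zero sum is preserved by pointwise decomposition. -/
lemma sum_supp_eq' (c : (Fin k → ℝ) →₀ ℝ) (U : Finset (Fin k → ℝ))
    (h : c.support ⊆ U) : ∑ x ∈ c.support, c x = ∑ x ∈ U, c x := by
  refine Finset.sum_subset h fun x _ hx => Finsupp.notMem_support_iff.mp hx

lemma subadd (a b c : (Fin k → ℝ) →₀ ℝ) (hc : ∀ x, c x = a x + b x)
    (hza : ∑ x ∈ a.support, a x = 0) (hzb : ∑ x ∈ b.support, b x = 0) :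
    sSup (Sset c) ≤ sSup (Sset a) + sSup (Sset b) := by
  refine Real.sSup_le ?_ (add_nonneg (opt_nonneg a hza) (opt_nonneg b hzb))
  rintro r ⟨φ, hφ, rfl⟩
  set U : Finset (Fin k → ℝ) := c.support ∪ a.support ∪ b.support with hU
  have hcU : c.support ⊆ U := by intro x hx; simp [hU, hx]
  have haU : a.support ⊆ U := by intro x hx; simp [hU, hx]
  have hbU : b.support ⊆ U := by intro x hx; simp [hU, hx]
  have key : ∑ x ∈ c.support, φ x * c x
      = (∑ x ∈ a.support, φ x * a x) + ∑ x ∈ b.support, φ x * b x := by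
    rw [sum_supp_eq φ c U hcU, sum_supp_eq φ a U haU, sum_supp_eq φ b U hbU,
      ← Finset.sum_add_distrib]
    refine Finset.sum_congr rfl fun x _ => ?_
    rw [hc x]; ring
  rw [key]
  exact add_le_add (le_csSup (bdd a hza) ⟨φ, hφ, rfl⟩)
    (le_csSup (bdd b hzb) ⟨φ, hφ, rfl⟩)

/-- Separation lower bound. -/
lemma sep_lower (c : (Fin k → ℝ) →₀ ℝ) (hz : ∑ x ∈ c.support, c x = 0)
    (ε : ℝ) (hε : 0 ≤ ε)
    (hsep : ∀ x ∈ c.support, ∀ y ∈ c.support, x ≠ y → 2 * ε ≤ ∑ i, |x i - y i|) :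
    ε * ∑ x ∈ c.support, |c x| ≤ sSup (Sset c) := by
  rcases c.support.eq_empty_or_nonempty with he | hne
  · rw [he]; simpa using opt_nonneg c hz
  set φ₀ : (Fin k → ℝ) → ℝ := fun x => if 0 < c x then ε else -ε with hφ₀
  set φ : (Fin k → ℝ) → ℝ :=
    fun z => c.support.inf' hne (fun x => φ₀ x + ∑ i, |x i - z i|) with hφdef
  have hφ₀abs : ∀ x, |φ₀ x| = ε := by
    intro x; by_cases h : 0 < c x <;> simp [hφ₀, h, abs_of_nonneg hε]
  have hd0 : ∀ x : Fin k → ℝ, (∑ i, |x i - x i|) = 0 := by simp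
  -- φ z - φ w ≤ d z w
  have hlip1 : ∀ z w : Fin k → ℝ, φ z - φ w ≤ ∑ i, |z i - w i| := by
    intro z w
    obtain ⟨y, hy, hyw⟩ := Finset.exists_mem_eq_inf' hne
      (fun x => φ₀ x + ∑ i, |x i - w i|)
    have h1 : φ z ≤ φ₀ y + ∑ i, |y i - z i| :=
      Finset.inf'_le _ hy
    have h2 : (∑ i, |y i - z i|) ≤ (∑ i, |y i - w i|) + ∑ i, |z i - w i| := by
      rw [← Finset.sum_add_distrib]
      refine Finset.sum_le_sum fun i _ => ?_
      calc |y i - z i| ≤ |y i - w i| + |w i - z i| := abs_sub_le _ _ _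
        _ = |y i - w i| + |z i - w i| := by rw [abs_sub_comm (w i)]
    have hw : φ w = φ₀ y + ∑ i, |y i - w i| := hyw
    linarith
  have hlip : ∀ x y : Fin k → ℝ, |φ x - φ y| ≤ ∑ i, |x i - y i| := by
    intro x y
    rw [abs_sub_le_iff]
    refine ⟨hlip1 x y, ?_⟩
    have := hlip1 y x
    have hsym : (∑ i, |y i - x i|) = ∑ i, |x i - y i| := by
      refine Finset.sum_congr rfl fun i _ => abs_sub_comm _ _
    linarith
  have hval : ∀ x ∈ c.support, φ x = φ₀ x := by
    intro x hx
    refine le_antisymm ?_ ?_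
    · have h1 := Finset.inf'_le (fun y => φ₀ y + ∑ i, |y i - x i|) hx
      have h2 : φ₀ x + ∑ i, |x i - x i| = φ₀ x := by simp
      calc φ x ≤ φ₀ x + ∑ i, |x i - x i| := h1
        _ = φ₀ x := h2
    · refine Finset.le_inf' hne _ fun y hy => ?_
      rcases eq_or_ne y x with rfl | hne'
      · simp [hd0 y]
      · have hs := hsep y hy x hx hne'
        have h1 : φ₀ x ≤ ε := le_of_abs_le (le_of_eq (hφ₀abs x))
        have h2 : -ε ≤ φ₀ y := neg_le_of_abs_le (le_of_eq (hφ₀abs y))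
        linarith
  have hmem : ε * (∑ x ∈ c.support, |c x|) ∈ Sset c := by
    refine ⟨φ, hlip, ?_⟩
    rw [Finset.mul_sum]
    refine Finset.sum_congr rfl fun x hx => ?_
    rw [hval x hx]
    have hcx : c x ≠ 0 := Finsupp.mem_support_iff.mp hx
    by_cases h : 0 < c x
    · simp [hφ₀, h, abs_of_pos h, mul_comm]
    · have hlt : c x < 0 := lt_of_le_of_ne (not_lt.mp h) hcx
      simp [hφ₀, h, abs_of_neg hlt]
  exact le_csSup (bdd c hz) hmem

end Stmt16Aux

open Stmt16Aux in
/-- Preconditioner quality bound (telescoping level costs): for a chain of reductions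
`b_T, …, b_0` of zero-sum demands in `ℓ₁` space with non-increasing min-cost, per-level
reduction cost at most `k·2^{-t}‖b_t‖₁`, each `b_t` supported on a `2^{-t}`-separated
set, and `b_0` supported on a set of diameter at most `k`,
`‖b_T‖_opt ≤ Σ_s k·2^{-s}‖b_s‖₁ ≤ 2k(T+1)‖b_T‖_opt`. -/
theorem stmt16 (k T : ℕ) (b : ℕ → ((Fin k → ℝ) →₀ ℝ))
    (opt : ((Fin k → ℝ) →₀ ℝ) → ℝ)
    (hopt : ∀ c, opt c = sSup {r | ∃ φ : (Fin k → ℝ) → ℝ,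
      (∀ x y : Fin k → ℝ, |φ x - φ y| ≤ ∑ i, |x i - y i|) ∧
      r = ∑ x ∈ c.support, φ x * c x})
    (norm1 : ((Fin k → ℝ) →₀ ℝ) → ℝ)
    (hnorm1 : ∀ c, norm1 c = ∑ x ∈ c.support, |c x|)
    (hzero : ∀ t ≤ T, ∑ x ∈ (b t).support, b t x = 0)
    (hmono : ∀ t, 1 ≤ t → t ≤ T → opt (b (t - 1)) ≤ opt (b t))
    (hcost : ∀ t, 1 ≤ t → t ≤ T →
      opt (b t - b (t - 1)) ≤ (k : ℝ) * (1 / 2) ^ t * norm1 (b t))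
    (hsep : ∀ t ≤ T, ∀ x ∈ (b t).support, ∀ y ∈ (b t).support, x ≠ y →
      ((1 / 2 : ℝ)) ^ t ≤ ∑ i, |x i - y i|)
    (hdiam : ∀ x ∈ (b 0).support, ∀ y ∈ (b 0).support, ∑ i, |x i - y i| ≤ (k : ℝ)) :
    opt (b T) ≤ ∑ s ∈ Finset.range (T + 1), (k : ℝ) * (1 / 2) ^ s * norm1 (b s) ∧
    ∑ s ∈ Finset.range (T + 1), (k : ℝ) * (1 / 2) ^ s * norm1 (b s) ≤
      2 * (k : ℝ) * (T + 1) * opt (b T) := by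
  have hopt' : ∀ c, opt c = sSup (Sset c) := hopt
  -- zero sum of differences
  have hzdiff : ∀ n, n + 1 ≤ T →
      ∑ x ∈ (b (n+1) - b n).support, (b (n+1) - b n) x = 0 := by
    intro n hn
    set U : Finset (Fin k → ℝ) :=
      (b (n+1) - b n).support ∪ (b (n+1)).support ∪ (b n).support with hU
    have h1 : (b (n+1) - b n).support ⊆ U := by intro x hx; simp [hU, hx]
    have h2 : (b (n+1)).support ⊆ U := by intro x hx; simp [hU, hx]
    have h3 : (b n).support ⊆ U := by intro x hx; simp [hU, hx]
    rw [sum_supp_eq' _ U h1]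
    have : ∑ x ∈ U, (b (n+1) - b n) x
        = (∑ x ∈ U, b (n+1) x) - ∑ x ∈ U, b n x := by
      rw [← Finset.sum_sub_distrib]
      exact Finset.sum_congr rfl fun x _ => by simp
    rw [this, ← sum_supp_eq' _ U h2, ← sum_supp_eq' _ U h3,
      hzero (n+1) hn, hzero n (le_trans (Nat.le_succ n) hn), sub_zero]
  -- monotone chain
  have hchain : ∀ t ≤ T, ∀ s ≤ t, opt (b s) ≤ opt (b t) := by
    intro t
    induction t with
    | zero => intro _ s hs; interval_cases s; exact le_refl _
    | succ n ih =>
      intro hn s hs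
      rcases Nat.lt_or_ge s (n+1) with h | h
      · have h1 : opt (b s) ≤ opt (b n) :=
          ih (le_trans (Nat.le_succ n) hn) s (Nat.lt_succ_iff.mp h)
        have h2 := hmono (n+1) (Nat.succ_le_succ (Nat.zero_le n)) hn
        simpa using le_trans h1 h2
      · have : s = n + 1 := le_antisymm hs h
        rw [this]
  -- separation lower bound per level
  have hlow : ∀ s ≤ T, (1/2 : ℝ)^(s+1) * norm1 (b s) ≤ opt (b s) := by
    intro s hs
    rw [hnorm1, hopt']
    refine sep_lower (b s) (hzero s hs) _ (by positivity) ?_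
    intro x hx y hy hxy
    have := hsep s hs x hx y hy hxy
    have h2 : 2 * (1/2 : ℝ)^(s+1) = (1/2)^s := by ring
    linarith
  constructor
  · -- left inequality
    have main : ∀ n ≤ T, opt (b n) ≤
        ∑ s ∈ Finset.range (n + 1), (k : ℝ) * (1 / 2) ^ s * norm1 (b s) := by
      intro n
      induction n with
      | zero =>
        intro _
        rw [Finset.sum_range_one, pow_zero, mul_one, hopt', hnorm1]
        rcases (b 0).support.eq_empty_or_nonempty with he | ⟨x₀, hx₀⟩
        · have := sSup_le_bound (b 0) (hzero 0 (Nat.zero_le T)) 0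
          rw [he] at this ⊢
          simpa using this
        · refine le_trans (sSup_le_bound (b 0) (hzero 0 (Nat.zero_le T)) x₀) ?_
          rw [Finset.mul_sum]
          refine Finset.sum_le_sum fun x hx => ?_
          exact mul_le_mul_of_nonneg_right (hdiam x hx x₀ hx₀) (abs_nonneg _)
      | succ n ih =>
        intro hn
        have hT : n ≤ T := le_trans (Nat.le_succ n) hn
        have hsub : opt (b (n+1)) ≤ opt (b n) + opt (b (n+1) - b n) := by
          rw [hopt', hopt', hopt']
          exact subadd (b n) (b (n+1) - b n) (b (n+1))
            (fun x => by simp) (hzero n hT) (hzdiff n hn)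
        have hc := hcost (n+1) (Nat.succ_le_succ (Nat.zero_le n)) hn
        simp only [Nat.add_sub_cancel] at hc
        rw [Finset.sum_range_succ]
        calc opt (b (n+1)) ≤ opt (b n) + opt (b (n+1) - b n) := hsub
          _ ≤ (∑ s ∈ Finset.range (n + 1), (k : ℝ) * (1 / 2) ^ s * norm1 (b s))
              + (k : ℝ) * (1 / 2) ^ (n+1) * norm1 (b (n+1)) :=
            add_le_add (ih hT) hc
    exact main T (le_refl T)
  · -- right inequality
    have hterm : ∀ s ≤ T, (k : ℝ) * (1 / 2) ^ s * norm1 (b s)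
        ≤ 2 * (k : ℝ) * opt (b T) := by
      intro s hs
      have h1 := hlow s hs
      have h2 := hchain T (le_refl T) s hs
      have e : (k:ℝ) * (1 / 2) ^ s * norm1 (b s)
          = 2 * (k:ℝ) * ((1/2)^(s+1) * norm1 (b s)) := by ring
      rw [e]
      exact mul_le_mul_of_nonneg_left (h1.trans h2) (by positivity)
    calc ∑ s ∈ Finset.range (T + 1), (k : ℝ) * (1 / 2) ^ s * norm1 (b s)
        ≤ ∑ s ∈ Finset.range (T + 1), 2 * (k : ℝ) * opt (b T) :=
          Finset.sum_le_sum fun s hs => hterm s (Nat.lt_succ_iff.mp (Finset.mem_range.mp hs))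
      _ = 2 * (k : ℝ) * (T + 1) * opt (b T) := by
          rw [Finset.sum_const, Finset.card_range]
          push_cast
          ring
end

section
/- Distribution over non-stretching self-embeddings preserves routability: Let (V,d) be a finite metric space, U ⊆ V, and let Ψ be a random map V → U with E[d(Ψ(x), Ψ(y))] ≤ d(x,y) for all x,y ∈ V (Ψ may round different points using shared randomness). Given zero-sum demands b on V, let b̃ on U be defined by b̃(u) = Σ_x b(x)·P[Ψ(x) = u]. Then ‖b̃‖_opt(d) ≤ ‖b‖_opt(d). -/
open Classical in
/-- A distribution over non-stretching self-embeddings into `U` preserves routability: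
the reduced demands `b̃(u) = Σ_x b(x)·P[Ψ(x)=u]` satisfy `‖b̃‖_opt(d) ≤ ‖b‖_opt(d)`. -/
theorem stmt17 {V : Type*} [Fintype V] (d : V → V → ℝ)
    (hd0 : ∀ x, d x x = 0) (hdsymm : ∀ x y, d x y = d y x)
    (hdtri : ∀ x y z, d x z ≤ d x y + d y z) (hdpos : ∀ x y, x ≠ y → 0 < d x y)
    (U : Set V)
    {Ω : Type*} [Fintype Ω] (p : Ω → ℝ)
    (hp0 : ∀ ω, 0 ≤ p ω) (hp1 : ∑ ω, p ω = 1)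
    (Ψ : Ω → V → V) (hΨU : ∀ ω x, Ψ ω x ∈ U)
    (hstretch : ∀ x y, ∑ ω, p ω * d (Ψ ω x) (Ψ ω y) ≤ d x y)
    (b : V → ℝ) (hb : ∑ v, b v = 0)
    (bt : V → ℝ)
    (hbt : ∀ u, bt u = ∑ ω, p ω * ∑ x, (if Ψ ω x = u then b x else 0)) :
    sSup {r | ∃ φ : V → ℝ, (∀ x y, |φ x - φ y| ≤ d x y) ∧ r = ∑ v, φ v * bt v} ≤
    sSup {r | ∃ φ : V → ℝ, (∀ x y, |φ x - φ y| ≤ d x y) ∧ r = ∑ v, φ v * b v} := by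
  have hdnn : ∀ x y, 0 ≤ d x y := by
    intro x y
    rcases eq_or_ne x y with h | h
    · simp [h, hd0 y]
    · exact (hdpos x y h).le
  obtain hV | hV := isEmpty_or_nonempty V
  · have h0 : ∀ (f : V → ℝ), ∑ v, f v = 0 := fun f => by simp
    simp only [h0]
    exact le_rfl
  obtain ⟨x0⟩ := hV
  apply csSup_le_csSup
  · -- BddAbove of RHS
    refine ⟨∑ v, d v x0 * |b v|, ?_⟩
    rintro r ⟨φ, hφ, rfl⟩
    calc ∑ v, φ v * b v = ∑ v, (φ v - φ x0) * b v := by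
          simp [sub_mul, Finset.sum_sub_distrib, ← Finset.mul_sum, hb]
      _ ≤ ∑ v, |(φ v - φ x0) * b v| := Finset.sum_le_sum fun v _ => le_abs_self _
      _ ≤ ∑ v, d v x0 * |b v| := Finset.sum_le_sum fun v _ => by
          rw [abs_mul]
          exact mul_le_mul_of_nonneg_right (hφ v x0) (abs_nonneg _)
  · exact ⟨0, fun _ => 0, fun x y => by simpa using hdnn x y, by simp⟩
  · rintro r ⟨φ, hφ, rfl⟩
    refine ⟨fun v => ∑ ω, p ω * φ (Ψ ω v), fun x y => ?_, ?_⟩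
    · have hrw : (∑ ω, p ω * φ (Ψ ω x)) - ∑ ω, p ω * φ (Ψ ω y)
          = ∑ ω, p ω * (φ (Ψ ω x) - φ (Ψ ω y)) := by
        rw [← Finset.sum_sub_distrib]
        exact Finset.sum_congr rfl fun ω _ => by ring
      rw [hrw]
      calc |∑ ω, p ω * (φ (Ψ ω x) - φ (Ψ ω y))|
          ≤ ∑ ω, |p ω * (φ (Ψ ω x) - φ (Ψ ω y))| := Finset.abs_sum_le_sum_abs _ _
        _ ≤ ∑ ω, p ω * d (Ψ ω x) (Ψ ω y) := Finset.sum_le_sum fun ω _ => by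
            rw [abs_mul, abs_of_nonneg (hp0 ω)]
            exact mul_le_mul_of_nonneg_left (hφ _ _) (hp0 ω)
        _ ≤ d x y := hstretch x y
    · have key : ∀ ω x', ∑ v, φ v * (if Ψ ω x' = v then b x' else 0)
          = φ (Ψ ω x') * b x' := by
        intro ω x'
        rw [Finset.sum_eq_single (Ψ ω x')]
        · simp
        · intro v _ hv; simp [Ne.symm hv]
        · simp
      calc ∑ v, φ v * bt v
          = ∑ v, ∑ ω, ∑ x', p ω * (φ v * (if Ψ ω x' = v then b x' else 0)) := by
            refine Finset.sum_congr rfl fun v _ => ?_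
            rw [hbt v, Finset.mul_sum]
            refine Finset.sum_congr rfl fun ω _ => ?_
            rw [Finset.mul_sum, Finset.mul_sum]
            exact Finset.sum_congr rfl fun x' _ => by ring
        _ = ∑ ω, ∑ x', p ω * (φ (Ψ ω x') * b x') := by
            rw [Finset.sum_comm]
            refine Finset.sum_congr rfl fun ω _ => ?_
            rw [Finset.sum_comm]
            refine Finset.sum_congr rfl fun x' _ => ?_
            rw [← Finset.mul_sum, key]
        _ = ∑ v, (∑ ω, p ω * φ (Ψ ω v)) * b v := by
            rw [Finset.sum_comm]
            refine Finset.sum_congr rfl fun v _ => ?_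
            rw [Finset.sum_mul]
            exact Finset.sum_congr rfl fun ω _ => by ring
end

section
/- For the family F of singleton subsets, the condition number equals the inverse conductance bound: Let G = (V,E,c) be connected and capacitated, and define for zero-sum demands ‖b‖_F = max_{v∈V} |b(v)| / c(∂{v}). Then for every zero-sum b, ‖b‖_F ≤ min{‖j‖_c : Dj = b} ≤ (1/Φ)·‖b‖_F, where Φ = min_{S : c(vol S) ≤ c(vol V)/2} c(∂S)/c(vol S) is the combinatorial conductance and c(vol S) = Σ_{v ∈ S} c(∂{v}). -/
open Classical in
lemma stmt19_layercake {V E : Type*} [Fintype V] [Nonempty V] [Fintype E]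
    (head tail : E → V) (c : E → ℝ) (hc : ∀ e, 0 ≤ c e)
    (b : V → ℝ) (hb : ∑ v, b v = 0)
    (K : ℝ) (hK : 0 ≤ K)
    (capB : Finset V → ℝ)
    (hcapB : ∀ S, capB S = ∑ e ∈ Finset.univ.filter
      (fun e => (head e ∈ S ∧ tail e ∉ S) ∨ (head e ∉ S ∧ tail e ∈ S)), c e)
    (hcut : ∀ S : Finset V, S.Nonempty → S ≠ Finset.univ → |∑ v ∈ S, b v| ≤ K * capB S) :
    ∀ y : V → ℝ, ∑ v, b v * y v ≤ K * ∑ e, c e * |y (head e) - y (tail e)| := by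
  suffices H : ∀ n : ℕ, ∀ y : V → ℝ, (Finset.image y Finset.univ).card ≤ n →
      ∑ v, b v * y v ≤ K * ∑ e, c e * |y (head e) - y (tail e)| by
    intro y; exact H _ y le_rfl
  intro n
  induction n with
  | zero =>
    intro y hy
    have : (Finset.image y Finset.univ).Nonempty :=
      (Finset.univ_nonempty).image y
    rw [Nat.le_zero, Finset.card_eq_zero] at hy
    exact absurd hy this.ne_empty
  | succ n ih =>
    intro y hy
    by_cases hle : (Finset.image y Finset.univ).card ≤ n
    · exact ih y hle
    -- card = n+1
    have hcard : (Finset.image y Finset.univ).card = n + 1 := le_antisymm hy (by omega)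
    by_cases h1 : (Finset.image y Finset.univ).card ≤ 1
    · -- y is constant
      have hne : (Finset.image y Finset.univ).Nonempty := (Finset.univ_nonempty).image y
      obtain ⟨a, ha⟩ := Finset.card_eq_one.mp (le_antisymm h1 hne.card_pos)
      have hconst : ∀ v, y v = a := by
        intro v
        have : y v ∈ Finset.image y Finset.univ := Finset.mem_image_of_mem y (Finset.mem_univ v)
        rw [ha] at this; exact Finset.mem_singleton.mp this
      have hLHS : ∑ v, b v * y v = 0 := by
        calc ∑ v, b v * y v = ∑ v, b v * a := by
              refine Finset.sum_congr rfl fun v _ => by rw [hconst v]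
          _ = (∑ v, b v) * a := by rw [Finset.sum_mul]
          _ = 0 := by rw [hb, zero_mul]
      rw [hLHS]
      have : 0 ≤ ∑ e, c e * |y (head e) - y (tail e)| :=
        Finset.sum_nonneg fun e _ => mul_nonneg (hc e) (abs_nonneg _)
      positivity
    · -- main step
      set T := Finset.image y Finset.univ with hT
      have hT2 : 2 ≤ T.card := by omega
      have hTne : T.Nonempty := (Finset.univ_nonempty).image y
      set M := T.max' hTne with hM
      have hMT : M ∈ T := T.max'_mem hTne
      have herasene : (T.erase M).Nonempty := by
        rw [← Finset.card_pos, Finset.card_erase_of_mem hMT]; omega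
      set M' := (T.erase M).max' herasene with hM'
      have hM'mem : M' ∈ T.erase M := (T.erase M).max'_mem herasene
      have hM'M : M' < M :=
        lt_of_le_of_ne (T.le_max' M' (Finset.mem_of_mem_erase hM'mem))
          (Finset.ne_of_mem_erase hM'mem)
      set S := Finset.univ.filter (fun v => y v = M) with hS
      have hmemS : ∀ v, v ∈ S ↔ y v = M := by
        intro v; simp [hS]
      have hyle : ∀ v, y v ≤ M := fun v =>
        T.le_max' _ (Finset.mem_image_of_mem y (Finset.mem_univ v))
      have hnotS : ∀ v, v ∉ S → y v ≤ M' := by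
        intro v hv
        refine (T.erase M).le_max' _ (Finset.mem_erase.mpr ⟨?_, ?_⟩)
        · exact fun h => hv ((hmemS v).mpr h)
        · exact Finset.mem_image_of_mem y (Finset.mem_univ v)
      set y' := fun v => min (y v) M' with hy'
      have hy'eq : ∀ v, y' v = if v ∈ S then M' else y v := by
        intro v
        by_cases hv : v ∈ S
        · simp only [hv, if_true, hy']
          exact min_eq_right (((hmemS v).mp hv) ▸ hM'M.le)
        · simp only [hv, if_false, hy']
          exact min_eq_left (hnotS v hv)
      -- edge identity
      have hedge : ∀ u w : V, |y u - y w| = |y' u - y' w| +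
          (M - M') * (if (u ∈ S ∧ w ∉ S) ∨ (u ∉ S ∧ w ∈ S) then (1:ℝ) else 0) := by
        intro u w
        by_cases hu : u ∈ S <;> by_cases hw : w ∈ S
        · have : y u = y w := by rw [(hmemS u).mp hu, (hmemS w).mp hw]
          have h' : y' u = y' w := by rw [hy'eq u, hy'eq w, if_pos hu, if_pos hw]
          simp [this, h', hu, hw]
        · have h1 : y u = M := (hmemS u).mp hu
          have h2 : y w ≤ M' := hnotS w hw
          have h3 : y' u = M' := by rw [hy'eq u, if_pos hu]
          have h4 : y' w = y w := by rw [hy'eq w, if_neg hw]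
          rw [h1, h3, h4, if_pos (Or.inl ⟨hu, hw⟩), abs_of_nonneg (by linarith),
            abs_of_nonneg (by linarith)]
          ring
        · have h1 : y w = M := (hmemS w).mp hw
          have h2 : y u ≤ M' := hnotS u hu
          have h3 : y' w = M' := by rw [hy'eq w, if_pos hw]
          have h4 : y' u = y u := by rw [hy'eq u, if_neg hu]
          rw [h1, h3, h4, if_pos (Or.inr ⟨hu, hw⟩), abs_of_nonpos (by linarith),
            abs_of_nonpos (by linarith)]
          ring
        · have h4 : y' u = y u := by rw [hy'eq u, if_neg hu]
          have h5 : y' w = y w := by rw [hy'eq w, if_neg hw]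
          simp [h4, h5, hu, hw]
      -- edge sum identity
      have hedgesum : ∑ e, c e * |y (head e) - y (tail e)| =
          (∑ e, c e * |y' (head e) - y' (tail e)|) + (M - M') * capB S := by
        have : ∀ e, c e * |y (head e) - y (tail e)| =
            c e * |y' (head e) - y' (tail e)| + (M - M') *
            (if (head e ∈ S ∧ tail e ∉ S) ∨ (head e ∉ S ∧ tail e ∈ S) then c e else 0) := by
          intro e
          rw [hedge (head e) (tail e)]
          by_cases h : (head e ∈ S ∧ tail e ∉ S) ∨ (head e ∉ S ∧ tail e ∈ S)
          · rw [if_pos h, if_pos h]; ring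
          · rw [if_neg h, if_neg h]; ring
        rw [Finset.sum_congr rfl (fun e _ => this e), Finset.sum_add_distrib,
          ← Finset.mul_sum, hcapB, Finset.sum_filter]
      -- vertex sum identity
      have hvertsum : ∑ v, b v * y v =
          (∑ v, b v * y' v) + (M - M') * ∑ v ∈ S, b v := by
        have : ∀ v, b v * y v = b v * y' v +
            (if v ∈ S then b v * (M - M') else 0) := by
          intro v
          rw [hy'eq v]
          by_cases hv : v ∈ S
          · rw [if_pos hv, if_pos hv, (hmemS v).mp hv]; ring
          · rw [if_neg hv, if_neg hv]; ring
        rw [Finset.sum_congr rfl (fun v _ => this v), Finset.sum_add_distrib]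
        congr 1
        rw [Finset.sum_ite_mem, Finset.univ_inter, ← Finset.sum_mul]
        ring
      -- S nonempty and proper
      have hSne : S.Nonempty := by
        obtain ⟨v, _, hv⟩ := Finset.mem_image.mp hMT
        exact ⟨v, (hmemS v).mpr hv⟩
      have hSprop : S ≠ Finset.univ := by
        obtain ⟨w, _, hw⟩ := Finset.mem_image.mp (Finset.mem_of_mem_erase hM'mem)
        intro h
        have : w ∈ S := h ▸ Finset.mem_univ w
        rw [hmemS w] at this
        exact absurd (hw.symm.trans this) (ne_of_lt hM'M)
      -- induction hypothesis applies to y'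
      have hsub : Finset.image y' Finset.univ ⊆ T.erase M := by
        intro a ha
        obtain ⟨v, _, hv⟩ := Finset.mem_image.mp ha
        rw [hy'eq v] at hv
        by_cases hvS : v ∈ S
        · rw [if_pos hvS] at hv; exact hv ▸ hM'mem
        · rw [if_neg hvS] at hv
          exact hv ▸ Finset.mem_erase.mpr ⟨fun h => hvS ((hmemS v).mpr h),
            Finset.mem_image_of_mem y (Finset.mem_univ v)⟩
      have hcard' : (Finset.image y' Finset.univ).card ≤ n := by
        have := Finset.card_le_card hsub
        rw [Finset.card_erase_of_mem hMT] at this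
        omega
      have hIH := ih y' hcard'
      have hcutS := hcut S hSne hSprop
      have hMM' : (0:ℝ) ≤ M - M' := by linarith
      calc ∑ v, b v * y v = (∑ v, b v * y' v) + (M - M') * ∑ v ∈ S, b v := hvertsum
        _ ≤ K * (∑ e, c e * |y' (head e) - y' (tail e)|) + (M - M') * (K * capB S) :=
            add_le_add hIH (mul_le_mul_of_nonneg_left ((le_abs_self _).trans hcutS) hMM')
        _ = K * ((∑ e, c e * |y' (head e) - y' (tail e)|) + (M - M') * capB S) := by ring
        _ = K * ∑ e, c e * |y (head e) - y (tail e)| := by rw [← hedgesum]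

open Classical in
/-- Singleton-cut preconditioning and conductance: for zero-sum demands `b`,
`‖b‖_F ≤ min-congestion(b) ≤ (1/Φ)·‖b‖_F`, where `‖b‖_F = max_v |b(v)|/c(∂{v})` and
`Φ` is the combinatorial conductance. -/
theorem stmt19 {V E : Type*} [Fintype V] [Nonempty V] [Fintype E] [Nonempty E]
    (head tail : E → V) (c : E → ℝ) (hc : ∀ e, 0 < c e)
    (D : (E → ℝ) →ₗ[ℝ] (V → ℝ))
    (hD : ∀ j v, D j v = ∑ e, j e *
      ((if head e = v then (1 : ℝ) else 0) - (if tail e = v then (1 : ℝ) else 0)))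
    (capB : Finset V → ℝ)
    (hcapB : ∀ S, capB S = ∑ e ∈ Finset.univ.filter
      (fun e => (head e ∈ S ∧ tail e ∉ S) ∨ (head e ∉ S ∧ tail e ∈ S)), c e)
    (hconn : ∀ S : Finset V, S.Nonempty → S ≠ Finset.univ → 0 < capB S)
    (h2 : 2 ≤ Fintype.card V)
    (deg : V → ℝ) (hdeg : ∀ v, deg v = capB {v})
    (vol : Finset V → ℝ) (hvol : ∀ S, vol S = ∑ v ∈ S, deg v)
    (Φ : ℝ)
    (hΦ : Φ = sInf {r | ∃ S : Finset V, S.Nonempty ∧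
      vol S ≤ vol Finset.univ / 2 ∧ r = capB S / vol S})
    (b : V → ℝ) (hb : ∑ v, b v = 0)
    (normF : ℝ)
    (hnormF : normF = Finset.univ.sup' Finset.univ_nonempty (fun v => |b v| / deg v)) :
    normF ≤ sInf {r | ∃ j : E → ℝ, D j = b ∧
        r = Finset.univ.sup' Finset.univ_nonempty (fun e => |j e| / c e)} ∧
    sInf {r | ∃ j : E → ℝ, D j = b ∧
        r = Finset.univ.sup' Finset.univ_nonempty (fun e => |j e| / c e)} ≤
      (1 / Φ) * normF := by
  classical
  -- basic positivity facts
  have hcapnn : ∀ S, 0 ≤ capB S := by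
    intro S; rw [hcapB]; exact Finset.sum_nonneg fun e _ => (hc e).le
  have hdegpos : ∀ v, 0 < deg v := by
    intro v
    rw [hdeg]
    refine hconn {v} (Finset.singleton_nonempty v) ?_
    intro h
    have := Finset.card_univ (α := V)
    rw [← h, Finset.card_singleton] at this
    omega
  have hvolpos : ∀ S : Finset V, S.Nonempty → 0 < vol S := by
    intro S hS
    rw [hvol]
    exact Finset.sum_pos (fun v _ => hdegpos v) hS
  have hnormF0 : 0 ≤ normF := by
    obtain ⟨v⟩ := (inferInstance : Nonempty V)
    rw [hnormF]
    exact le_trans (div_nonneg (abs_nonneg (b v)) (hdegpos v).le)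
      (Finset.le_sup' (fun v => |b v| / deg v) (Finset.mem_univ v))
  have hbv : ∀ v, |b v| ≤ normF * deg v := by
    intro v
    have := Finset.le_sup' (fun v => |b v| / deg v) (Finset.mem_univ v)
    rw [← hnormF] at this
    exact (div_le_iff₀ (hdegpos v)).mp this
  -- facts about Φ
  set setΦ : Set ℝ := {r | ∃ S : Finset V, S.Nonempty ∧
      vol S ≤ vol Finset.univ / 2 ∧ r = capB S / vol S} with hsetΦ
  have hfin : setΦ.Finite := by
    refine Set.Finite.subset (Set.finite_range fun S : Finset V => capB S / vol S) ?_
    rintro r ⟨S, _, _, rfl⟩; exact ⟨S, rfl⟩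
  have hneΦ : setΦ.Nonempty := by
    obtain ⟨v₀, _, hv₀⟩ := Finset.exists_min_image Finset.univ deg Finset.univ_nonempty
    obtain ⟨w, hw⟩ := Fintype.exists_ne_of_one_lt_card (by omega) v₀
    refine ⟨capB {v₀} / vol {v₀}, {v₀}, Finset.singleton_nonempty v₀, ?_, rfl⟩
    have h1 : vol {v₀} = deg v₀ := by rw [hvol, Finset.sum_singleton]
    have h2 : deg v₀ + deg w ≤ vol Finset.univ := by
      rw [hvol, ← Finset.sum_pair hw.symm]
      exact Finset.sum_le_sum_of_subset_of_nonneg (Finset.subset_univ _)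
        (fun v _ _ => (hdegpos v).le)
    have h3 : deg v₀ ≤ deg w := hv₀ w (Finset.mem_univ w)
    rw [h1]; linarith
  have hbddΦ : BddBelow setΦ := by
    refine ⟨0, ?_⟩
    rintro r ⟨S, hS, _, rfl⟩
    exact div_nonneg (hcapnn S) (hvolpos S hS).le
  have hΦmem : Φ ∈ setΦ := by rw [hΦ]; exact hneΦ.csInf_mem hfin
  have hΦpos : 0 < Φ := by
    obtain ⟨S, hSne, hSh, hval⟩ := hΦmem
    have hSuniv : S ≠ Finset.univ := by
      intro h
      rw [h] at hSh
      have := hvolpos Finset.univ Finset.univ_nonempty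
      linarith
    rw [hval]
    exact div_pos (hconn S hSne hSuniv) (hvolpos S hSne)
  have hΦle : ∀ S : Finset V, S.Nonempty → vol S ≤ vol Finset.univ / 2 →
      Φ ≤ capB S / vol S := by
    intro S h1 h2
    rw [hΦ]; exact csInf_le hbddΦ ⟨S, h1, h2, rfl⟩
  -- the cut bound
  have hcut : ∀ S : Finset V, S.Nonempty → S ≠ Finset.univ →
      |∑ v ∈ S, b v| ≤ (normF / Φ) * capB S := by
    have hhalf : ∀ S : Finset V, S.Nonempty → S ≠ Finset.univ →
        vol S ≤ vol Finset.univ / 2 → |∑ v ∈ S, b v| ≤ (normF / Φ) * capB S := by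
      intro S hne hprop hhalfS
      have h1 : |∑ v ∈ S, b v| ≤ normF * vol S := by
        calc |∑ v ∈ S, b v| ≤ ∑ v ∈ S, |b v| := Finset.abs_sum_le_sum_abs _ _
          _ ≤ ∑ v ∈ S, normF * deg v := Finset.sum_le_sum fun v _ => hbv v
          _ = normF * vol S := by rw [hvol, Finset.mul_sum]
      have h2 := hΦle S hne hhalfS
      have h3 : Φ * vol S ≤ capB S := by
        rw [le_div_iff₀ (hvolpos S hne)] at h2; linarith [h2]
      have h4 : vol S ≤ capB S / Φ := by
        rw [le_div_iff₀ hΦpos]; linarith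
      calc |∑ v ∈ S, b v| ≤ normF * vol S := h1
        _ ≤ normF * (capB S / Φ) := by gcongr
        _ = (normF / Φ) * capB S := by ring
    intro S hne hprop
    by_cases hS : vol S ≤ vol Finset.univ / 2
    · exact hhalf S hne hprop hS
    · have hvolc : vol S + vol Sᶜ = vol Finset.univ := by
        rw [hvol, hvol, hvol]; exact Finset.sum_add_sum_compl S deg
      have hsumc : ∑ v ∈ Sᶜ, b v = -∑ v ∈ S, b v := by
        have := Finset.sum_add_sum_compl S b
        rw [hb] at this; linarith
      have hcapc : capB Sᶜ = capB S := by
        rw [hcapB, hcapB]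
        congr 1
        apply Finset.filter_congr
        intro e _
        simp only [Finset.mem_compl, not_not, eq_iff_iff]
        tauto
      have hcne : Sᶜ.Nonempty := by
        rw [← Finset.card_pos, Finset.card_compl]
        have := Finset.card_lt_card ((Finset.subset_univ S).ssubset_of_ne hprop)
        rw [Finset.card_univ] at this
        omega
      have hcprop : Sᶜ ≠ Finset.univ := by
        intro h
        rw [Finset.compl_eq_univ_iff] at h
        exact absurd h hne.ne_empty
      have hchalf : vol Sᶜ ≤ vol Finset.univ / 2 := by linarith
      have := hhalf Sᶜ hcne hcprop hchalf
      rw [hsumc, abs_neg, hcapc] at this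
      exact this
  -- layer cake
  have hlc := stmt19_layercake head tail c (fun e => (hc e).le) b hb (normF / Φ)
    (div_nonneg hnormF0 hΦpos.le) capB hcapB hcut
  -- D sum identity
  have hDsum : ∀ (j : E → ℝ) (y : V → ℝ),
      ∑ v, D j v * y v = ∑ e, j e * (y (head e) - y (tail e)) := by
    intro j y
    simp only [hD, Finset.sum_mul]
    rw [Finset.sum_comm]
    refine Finset.sum_congr rfl fun e _ => ?_
    have : ∀ v, j e * ((if head e = v then (1:ℝ) else 0) -
        (if tail e = v then (1:ℝ) else 0)) * y v =
        (if head e = v then j e * y v else 0) - (if tail e = v then j e * y v else 0) := by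
      intro v; split_ifs <;> ring
    rw [Finset.sum_congr rfl fun v _ => this v, Finset.sum_sub_distrib,
      Finset.sum_ite_eq, Finset.sum_ite_eq]
    simp [mul_sub]
  -- existence of a flow with congestion ≤ normF/Φ
  set t := normF / Φ with htdef
  have ht0 : 0 ≤ t := div_nonneg hnormF0 hΦpos.le
  have hbK : b ∈ ⇑D '' (Set.univ.pi fun e => Set.Icc (-(t * c e)) (t * c e)) := by
    set J : Set (E → ℝ) := Set.univ.pi fun e => Set.Icc (-(t * c e)) (t * c e) with hJ
    have hJc : IsCompact J := isCompact_univ_pi fun e => isCompact_Icc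
    have hJconv : Convex ℝ J := convex_pi fun e _ => convex_Icc _ _
    have hDcont : Continuous ⇑D := D.continuous_of_finiteDimensional
    by_contra hnb
    obtain ⟨f, u, hfu, hub⟩ := geometric_hahn_banach_closed_point
      (hJconv.linear_image D) (hJc.image hDcont).isClosed hnb
    set y : V → ℝ := fun v => f (Pi.single v 1) with hy
    have hf : ∀ x : V → ℝ, f x = ∑ v, x v * y v := by
      intro x
      conv_lhs => rw [← Finset.univ_sum_single x]
      rw [map_sum]
      refine Finset.sum_congr rfl fun v _ => ?_
      have hsing : Pi.single v (x v) = x v • (Pi.single v (1:ℝ) : V → ℝ) := by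
        rw [← Pi.single_smul, smul_eq_mul, mul_one]
      rw [hsing, map_smul, smul_eq_mul]
    set j₀ : E → ℝ := fun e => if y (tail e) ≤ y (head e) then t * c e else -(t * c e)
      with hj₀
    have hj₀J : j₀ ∈ J := by
      intro e _
      have h0 : 0 ≤ t * c e := mul_nonneg ht0 (hc e).le
      by_cases hcase : y (tail e) ≤ y (head e) <;>
        simp [hj₀, hcase, Set.mem_Icc] <;> linarith
    have hfD : f (D j₀) = t * ∑ e, c e * |y (head e) - y (tail e)| := by
      rw [hf, hDsum j₀ y, Finset.mul_sum]
      refine Finset.sum_congr rfl fun e _ => ?_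
      by_cases hcase : y (tail e) ≤ y (head e)
      · rw [hj₀]; simp only [hcase, if_true]
        rw [abs_of_nonneg (sub_nonneg.mpr hcase)]; ring
      · rw [hj₀]; simp only [hcase, if_false]
        push_neg at hcase
        rw [abs_of_neg (sub_neg.mpr hcase)]; ring
    have h1 : f (D j₀) < u := hfu _ (Set.mem_image_of_mem _ hj₀J)
    have h2 : u < f b := hub
    have h3 : f b ≤ t * ∑ e, c e * |y (head e) - y (tail e)| := by
      rw [hf]; exact hlc y
    rw [hfD] at h1
    linarith
  obtain ⟨j₀, hj₀J, hDj₀⟩ := hbK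
  set Sflow : Set ℝ := {r | ∃ j : E → ℝ, D j = b ∧
      r = Finset.univ.sup' Finset.univ_nonempty (fun e => |j e| / c e)} with hSflow
  have hr₀mem : Finset.univ.sup' Finset.univ_nonempty (fun e => |j₀ e| / c e) ∈ Sflow :=
    ⟨j₀, hDj₀, rfl⟩
  have hr₀le : Finset.univ.sup' Finset.univ_nonempty (fun e => |j₀ e| / c e) ≤ t := by
    refine Finset.sup'_le _ _ fun e _ => ?_
    have := hj₀J e (Set.mem_univ e)
    rw [Set.mem_Icc] at this
    rw [div_le_iff₀ (hc e)]
    rw [abs_le]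
    constructor <;> [linarith [this.1]; linarith [this.2]]
  -- lower bound on every element of Sflow
  have hlow : ∀ r ∈ Sflow, normF ≤ r := by
    rintro r ⟨j, hj, rfl⟩
    set r := Finset.univ.sup' Finset.univ_nonempty (fun e => |j e| / c e) with hr
    have hjle : ∀ e, |j e| ≤ r * c e := by
      intro e
      have := Finset.le_sup' (fun e => |j e| / c e) (Finset.mem_univ e)
      rw [← hr] at this
      exact (div_le_iff₀ (hc e)).mp this
    rw [hnormF]
    refine Finset.sup'_le _ _ fun v _ => ?_
    rw [div_le_iff₀ (hdegpos v)]
    have hbvj : b v = D j v := by rw [hj]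
    have hterm : ∀ e, |j e * ((if head e = v then (1:ℝ) else 0) -
        (if tail e = v then (1:ℝ) else 0))| ≤
        (if (head e ∈ ({v} : Finset V) ∧ tail e ∉ ({v} : Finset V)) ∨
          (head e ∉ ({v} : Finset V) ∧ tail e ∈ ({v} : Finset V)) then |j e| else 0) := by
      intro e
      simp only [Finset.mem_singleton]
      by_cases h1 : head e = v <;> by_cases h2 : tail e = v <;>
        simp [h1, h2, abs_nonneg]
    calc |b v| = |D j v| := by rw [hbvj]
      _ = |∑ e, j e * ((if head e = v then (1:ℝ) else 0) -
            (if tail e = v then (1:ℝ) else 0))| := by rw [hD]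
      _ ≤ ∑ e, |j e * ((if head e = v then (1:ℝ) else 0) -
            (if tail e = v then (1:ℝ) else 0))| := Finset.abs_sum_le_sum_abs _ _
      _ ≤ ∑ e, (if (head e ∈ ({v} : Finset V) ∧ tail e ∉ ({v} : Finset V)) ∨
            (head e ∉ ({v} : Finset V) ∧ tail e ∈ ({v} : Finset V)) then |j e| else 0) :=
          Finset.sum_le_sum fun e _ => hterm e
      _ = ∑ e ∈ Finset.univ.filter (fun e => (head e ∈ ({v} : Finset V) ∧
            tail e ∉ ({v} : Finset V)) ∨ (head e ∉ ({v} : Finset V) ∧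
            tail e ∈ ({v} : Finset V))), |j e| := (Finset.sum_filter _ _).symm
      _ ≤ ∑ e ∈ Finset.univ.filter (fun e => (head e ∈ ({v} : Finset V) ∧
            tail e ∉ ({v} : Finset V)) ∨ (head e ∉ ({v} : Finset V) ∧
            tail e ∈ ({v} : Finset V))), r * c e :=
          Finset.sum_le_sum fun e _ => hjle e
      _ = r * capB {v} := by rw [hcapB, Finset.mul_sum]
      _ = r * deg v := by rw [hdeg]
  constructor
  · exact le_csInf ⟨_, hr₀mem⟩ hlow
  · have h1 : sInf Sflow ≤ Finset.univ.sup' Finset.univ_nonempty (fun e => |j₀ e| / c e) :=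
      csInf_le ⟨normF, fun r hr => hlow r hr⟩ hr₀mem
    have h2 : (1 / Φ) * normF = t := by rw [htdef]; ring
    rw [h2]
    exact h1.trans hr₀le
end
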